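/- arXiv:2301.03576 — 6 statements merged into one kernel-verified Lean document; each statement's English description precedes it below -/
import Mathlib

section
/- Let E be a finite-dimensional real inner product space, f : E → ℝ continuously differentiable, h : E → ℝ twice continuously differentiable and strictly convex, μ ≥ 0, and α, β, γ : (0,∞) → ℝ continuously differentiable satisfying the first ideal scaling condition γ̇(t) = e^{α(t)} for all t > 0. Then a twice continuously differentiable curve X : (0,∞) → E satisfies the Euler–Lagrange equation d/dt[∇_v L(X(t), Ẋ(t), t)] = ∇_x L(X(t), Ẋ(t), t) for all t > 0 if and only if the curve Z(t) := X(t) + e^{−α(t)}·Ẋ(t) satisfies d/dt[∇h(Z(t))] = (μ·β̇(t)·e^{β(t)}/(1 + μ·e^{β(t)}))·(∇h(X(t)) − ∇h(Z(t))) − (e^{α(t)+β(t)}/(1 + μ·e^{β(t)}))·∇f(X(t)) for all t > 0. -/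
open scoped RealInnerProductSpace

/-- The Bregman divergence `D_h(y, x) = h(y) − h(x) − ⟨∇h(x), y − x⟩`. -/
noncomputable def breg {E : Type*} [NormedAddCommGroup E] [InnerProductSpace ℝ E]
    [CompleteSpace E] (h : E → ℝ) (y x : E) : ℝ :=
  h y - h x - ⟪gradient h x, y - x⟫

/-!
With `c = e^γ (1 + μ e^β)`, the velocity gradient is `∇_v L(X, Ẋ, t) = c · (∇h(Z) − ∇h(X))`, since
`e^{α+γ} e^{−α} = e^γ`. Because the Hessian of `h` is symmetric, the position gradient is
`∇_x L = e^{α+γ} (1 + μ e^β) (∇h(Z) − ∇h(X) − e^{−α} ∇²h(X) Ẋ) − e^{α+γ+β} ∇f(X)`.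
The scaling condition gives `ċ = e^α c + μ β̇ e^{γ+β}`, and since `c > 0` the product rule turns the
Euler–Lagrange equation into the flow equation for `∇h(Z)` once we divide by `c` and add back
`d/dt ∇h(X) = ∇²h(X) Ẋ`.
-/

open InnerProductSpace Real Set Topology

section GradientCalculus

variable {E : Type*} [NormedAddCommGroup E] [InnerProductSpace ℝ E] [CompleteSpace E]
  {f g : E → ℝ} {f' g' x : E}

theorem HasGradientAt.sub (hf : HasGradientAt f f' x) (hg : HasGradientAt g g' x) :
    HasGradientAt (fun y => f y - g y) (f' - g') x := by
  rw [hasGradientAt_iff_hasFDerivAt, map_sub]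
  exact hf.hasFDerivAt.sub hg.hasFDerivAt

theorem HasGradientAt.const_mul (hf : HasGradientAt f f' x) (c : ℝ) :
    HasGradientAt (fun y => c * f y) (c • f') x := by
  rw [hasGradientAt_iff_hasFDerivAt, map_smul]
  exact hf.hasFDerivAt.const_mul c

theorem HasGradientAt.comp_const_smul (s : ℝ) (hf : HasGradientAt f f' (s • x)) :
    HasGradientAt (fun y => f (s • y)) (s • f') x := by
  rw [hasGradientAt_iff_hasFDerivAt]
  refine (hf.hasFDerivAt.comp x ((hasFDerivAt_id x).const_smul s)).congr_fderiv ?_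
  ext u
  simp

theorem hasGradientAt_inner_const_left (g x : E) : HasGradientAt (fun y => ⟪g, y⟫) g x :=
  (toDual ℝ E g).hasFDerivAt

end GradientCalculus

section Hessian

variable {E : Type*} [NormedAddCommGroup E] [InnerProductSpace ℝ E] [CompleteSpace E]
  {h : E → ℝ} {x : E}

theorem inner_fderiv_gradient (u w : E) :
    ⟪fderiv ℝ (gradient h) x w, u⟫ = fderiv ℝ (fderiv ℝ h) x w u := by
  change ⟪fderiv ℝ ((toDual ℝ E).symm ∘ fderiv ℝ h) x w, u⟫ = _
  rw [LinearIsometryEquiv.comp_fderiv]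
  exact toDual_symm_apply

theorem ContDiffAt.hasFDerivAt_gradient (hh : ContDiffAt ℝ 2 h x) :
    HasFDerivAt (gradient h) (fderiv ℝ (gradient h) x) x :=
  ((toDual ℝ E).symm.comp_differentiableAt_iff.2
    ((hh.fderiv_right le_rfl).differentiableAt one_ne_zero)).hasFDerivAt

theorem ContDiffAt.hasGradientAt_inner_gradient (hh : ContDiffAt ℝ 2 h x) (w : E) :
    HasGradientAt (fun y => ⟪gradient h y, w⟫) (fderiv ℝ (gradient h) x w) x := by
  have hd : HasFDerivAt (fderiv ℝ h) (fderiv ℝ (fderiv ℝ h) x) x :=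
    ((hh.fderiv_right le_rfl).differentiableAt one_ne_zero).hasFDerivAt
  have H := hd.clm_apply (hasFDerivAt_const w x)
  simp only [inner_gradient_left]
  rw [hasGradientAt_iff_hasFDerivAt]
  refine H.congr_fderiv ?_
  ext u
  simp [inner_fderiv_gradient, hh.isSymmSndFDerivAt (by simp) u w]

end Hessian

section Bregman

variable {E : Type*} [NormedAddCommGroup E] [InnerProductSpace ℝ E] [CompleteSpace E]
  {h : E → ℝ} {x w : E}

theorem breg_self_add :
    breg h (x + w) x = h (x + w) - h x - ⟪gradient h x, w⟫ := by
  rw [breg, add_sub_cancel_left]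

theorem hasGradientAt_breg_self_add_right (hh : DifferentiableAt ℝ h (x + w)) :
    HasGradientAt (fun w => breg h (x + w) x) (gradient h (x + w) - gradient h x) w := by
  simp only [breg_self_add]
  have hshift : HasGradientAt (fun w => h (x + w)) (gradient h (x + w)) w :=
    (hasFDerivAt_comp_add_left x).2 hh.hasGradientAt.hasFDerivAt
  simpa using (hshift.sub (hasGradientAt_const w (h x))).sub
    (hasGradientAt_inner_const_left (gradient h x) w)

theorem hasGradientAt_breg_self_add_left (hx : ContDiffAt ℝ 2 h x)
    (hxw : DifferentiableAt ℝ h (x + w)) :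
    HasGradientAt (fun x => breg h (x + w) x)
      (gradient h (x + w) - gradient h x - fderiv ℝ (gradient h) x w) x := by
  simp only [breg_self_add]
  have hshift : HasGradientAt (fun x => h (x + w)) (gradient h (x + w)) x :=
    (hasFDerivAt_comp_add_right w).2 hxw.hasGradientAt.hasFDerivAt
  exact (hshift.sub (hx.differentiableAt two_ne_zero).hasGradientAt).sub
    (hx.hasGradientAt_inner_gradient w)

end Bregman

section Lagrangian

variable {E : Type*} [NormedAddCommGroup E] [InnerProductSpace ℝ E] [CompleteSpace E]
  {f h : E → ℝ} {μ : ℝ} {α β γ : ℝ → ℝ}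

noncomputable def bregmanLagrangian (f h : E → ℝ) (μ : ℝ) (α β γ : ℝ → ℝ) (x v : E) (t : ℝ) :
    ℝ :=
  exp (α t + γ t) * ((1 + μ * exp (β t)) * breg h (x + exp (-α t) • v) x - exp (β t) * f x)

theorem gradient_bregmanLagrangian_velocity {x v : E} {t : ℝ}
    (hh : DifferentiableAt ℝ h (x + exp (-α t) • v)) :
    gradient (fun v => bregmanLagrangian f h μ α β γ x v t) v
      = (exp (γ t) * (1 + μ * exp (β t))) •
          (gradient h (x + exp (-α t) • v) - gradient h x) := by
  have H := ((((hasGradientAt_breg_self_add_right hh).comp_const_smul (exp (-α t))).const_mul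
    (1 + μ * exp (β t))).sub (hasGradientAt_const v (exp (β t) * f x))).const_mul
    (exp (α t + γ t))
  refine H.gradient.trans ?_
  rw [sub_zero, smul_smul, smul_smul, exp_add, exp_neg]
  congr 1
  field_simp

theorem gradient_bregmanLagrangian_position {x v : E} {t : ℝ} (hx : ContDiffAt ℝ 2 h x)
    (hxv : DifferentiableAt ℝ h (x + exp (-α t) • v)) (hf : DifferentiableAt ℝ f x) :
    gradient (fun x => bregmanLagrangian f h μ α β γ x v t) x
      = (exp (α t + γ t) * (1 + μ * exp (β t))) •
          (gradient h (x + exp (-α t) • v) - gradient h x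
            - exp (-α t) • fderiv ℝ (gradient h) x v)
        - (exp (α t + γ t) * exp (β t)) • gradient f x := by
  have H := (((hasGradientAt_breg_self_add_left hx hxv).const_mul (1 + μ * exp (β t))).sub
    (hf.hasGradientAt.const_mul (exp (β t)))).const_mul (exp (α t + γ t))
  refine H.gradient.trans ?_
  rw [map_smul]
  module

end Lagrangian

section Curves

variable {𝕜 : Type*} [NontriviallyNormedField 𝕜] {F : Type*} [NormedAddCommGroup F]
  [NormedSpace 𝕜 F] {c : 𝕜 → 𝕜} {c' t : 𝕜} {P W Q : 𝕜 → F} {p b q : F}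

theorem hasDerivAt_smul_iff (hc : HasDerivAt c c' t) (hct : c t ≠ 0) :
    HasDerivAt (fun τ => c τ • P τ) (c' • P t + c t • p) t ↔ HasDerivAt P p t := by
  refine ⟨fun H => ?_, fun H => by simpa only [add_comm] using hc.fun_smul H⟩
  have hP : (fun τ => (c τ)⁻¹ • (c τ • P τ)) =ᶠ[𝓝 t] P := by
    filter_upwards [hc.continuousAt.eventually_ne hct] with τ hτ
    rw [smul_smul, inv_mul_cancel₀ hτ, one_smul]
  refine ((hc.inv hct).fun_smul H).congr_of_eventuallyEq hP.symm |>.congr_deriv ?_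
  match_scalars <;> simp only [Pi.inv_apply] <;> field_simp
  ring

theorem hasDerivAt_sub_iff_of_hasDerivAt (hQ : HasDerivAt Q q t) :
    HasDerivAt (fun τ => W τ - Q τ) (b - q) t ↔ HasDerivAt W b t :=
  ⟨fun H => by simpa using H.fun_add hQ, fun H => H.sub hQ⟩

end Curves

theorem unified_bregman_lagrangian_euler_lagrange_general
    {E : Type*} [NormedAddCommGroup E] [InnerProductSpace ℝ E] [FiniteDimensional ℝ E]
    (f h : E → ℝ) (hf : ContDiff ℝ 1 f) (hh : ContDiff ℝ 2 h)
    (μ : ℝ) (hμ : 0 ≤ μ)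
    (α β γ : ℝ → ℝ)
    (hβ : ContDiffOn ℝ 1 β (Set.Ioi 0))
    (hscaling : ∀ t ∈ Set.Ioi (0 : ℝ), HasDerivAt γ (Real.exp (α t)) t)
    (L : E → E → ℝ → ℝ)
    (hL : ∀ x v t, L x v t =
      Real.exp (α t + γ t) * ((1 + μ * Real.exp (β t)) * breg h (x + Real.exp (-α t) • v) x
        - Real.exp (β t) * f x))
    (X : ℝ → E) (hX : ContDiffOn ℝ 2 X (Set.Ioi 0))
    (Z : ℝ → E) (hZ : ∀ t, Z t = X t + Real.exp (-α t) • deriv X t) :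
    (∀ t ∈ Set.Ioi (0 : ℝ),
        HasDerivAt (fun τ => gradient (fun v => L (X τ) v τ) (deriv X τ))
          (gradient (fun x => L x (deriv X t) t) (X t)) t)
      ↔
    (∀ t ∈ Set.Ioi (0 : ℝ),
        HasDerivAt (fun τ => gradient h (Z τ))
          ((μ * deriv β t * Real.exp (β t) / (1 + μ * Real.exp (β t))) •
              (gradient h (X t) - gradient h (Z t))
            - (Real.exp (α t + β t) / (1 + μ * Real.exp (β t))) • gradient f (X t)) t) := by
  obtain rfl : L = bregmanLagrangian f h μ α β γ := by
    funext x v t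
    exact hL x v t
  have hdh : Differentiable ℝ h := hh.differentiable two_ne_zero
  refine forall₂_congr fun t ht => ?_
  have hXt : HasDerivAt X (deriv X t) t :=
    ((hX.contDiffAt (Ioi_mem_nhds ht)).differentiableAt two_ne_zero).hasDerivAt
  have hβt : HasDerivAt β (deriv β t) t :=
    ((hβ.contDiffAt (Ioi_mem_nhds ht)).differentiableAt one_ne_zero).hasDerivAt
  have hc := (hscaling t ht).exp.fun_mul ((hβt.exp.const_mul μ).const_add 1)
  have hQ := hh.contDiffAt.hasFDerivAt_gradient.comp_hasDerivAt t hXt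
  have hμβ : 0 < 1 + μ * exp (β t) := by positivity
  refine Iff.trans ?_ ((hasDerivAt_smul_iff hc (by positivity)).trans
    (hasDerivAt_sub_iff_of_hasDerivAt hQ))
  apply iff_of_eq
  congr 1
  · funext τ
    rw [gradient_bregmanLagrangian_velocity (hdh _), ← hZ, Function.comp_apply]
  · rw [gradient_bregmanLagrangian_position hh.contDiffAt (hdh _) (hf.differentiable one_ne_zero _),
      ← hZ]
    simp only [exp_add, exp_neg, Function.comp_apply]
    match_scalars <;> field_simp <;> ring

/-- On `(0,∞)`, under the first ideal scaling condition `γ̇ = e^α`, a twice continuously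
differentiable curve `X` satisfies the Euler–Lagrange equation for the unified Bregman
Lagrangian if and only if `Z(t) = X(t) + e^{−α(t)}·Ẋ(t)` satisfies the unified Bregman
Lagrangian flow equation. -/
theorem unified_bregman_lagrangian_euler_lagrange
    {E : Type*} [NormedAddCommGroup E] [InnerProductSpace ℝ E] [FiniteDimensional ℝ E]
    (f h : E → ℝ) (hf : ContDiff ℝ 1 f) (hh : ContDiff ℝ 2 h)
    (hhstrict : StrictConvexOn ℝ Set.univ h)
    (μ : ℝ) (hμ : 0 ≤ μ)
    (α β γ : ℝ → ℝ)
    (hα : ContDiffOn ℝ 1 α (Set.Ioi 0))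
    (hβ : ContDiffOn ℝ 1 β (Set.Ioi 0))
    (hγ : ContDiffOn ℝ 1 γ (Set.Ioi 0))
    (hscaling : ∀ t ∈ Set.Ioi (0 : ℝ), HasDerivAt γ (Real.exp (α t)) t)
    (L : E → E → ℝ → ℝ)
    (hL : ∀ x v t, L x v t =
      Real.exp (α t + γ t) * ((1 + μ * Real.exp (β t)) * breg h (x + Real.exp (-α t) • v) x
        - Real.exp (β t) * f x))
    (X : ℝ → E) (hX : ContDiffOn ℝ 2 X (Set.Ioi 0))
    (Z : ℝ → E) (hZ : ∀ t, Z t = X t + Real.exp (-α t) • deriv X t) :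
    (∀ t ∈ Set.Ioi (0 : ℝ),
        HasDerivAt (fun τ => gradient (fun v => L (X τ) v τ) (deriv X τ))
          (gradient (fun x => L x (deriv X t) t) (X t)) t)
      ↔
    (∀ t ∈ Set.Ioi (0 : ℝ),
        HasDerivAt (fun τ => gradient h (Z τ))
          ((μ * deriv β t * Real.exp (β t) / (1 + μ * Real.exp (β t))) •
              (gradient h (X t) - gradient h (Z t))
            - (Real.exp (α t + β t) / (1 + μ * Real.exp (β t))) • gradient f (X t)) t) :=
  unified_bregman_lagrangian_euler_lagrange_general f h hf hh μ hμ α β γ hβ hscaling L hL X hX Z hZ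
end

section
/- Let E be a finite-dimensional real inner product space, μ ≥ 0, f : E → ℝ differentiable and μ-strongly convex, and x* a minimizer of f. Suppose X, Z : [0,∞) → E are continuously differentiable and satisfy, for all t > 0, Ẋ(t) = (2/t)·cothc((√μ/2)·t)·(Z(t) − X(t)) and Ż(t) = (t/2)·tanhc((√μ/2)·t)·(μ·X(t) − μ·Z(t) − ∇f(X(t))). Then the energy function 𝓔(t) = (1/2)·cosh²((√μ/2)·t)·‖Z(t) − x*‖² + (t²/4)·sinhc²((√μ/2)·t)·(f(X(t)) − f(x*)) is monotonically nonincreasing on [0,∞). -/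
/-! With `A t = t / 2 * sinhc (√μ / 2 * t)` and `C t = cosh (√μ / 2 * t)` one has `A' = C / 2` and
`C' = μ / 2 * A`, and the system reads `Ẋ = (C / A) • (Z - X)`, `Ż = (A / C) • (μ • X - μ • Z - ∇f X)`.
The energy is `½ C² ‖Z - x*‖² + A² (f X - f x*)`; its derivative is `A C` times a bracket which
strong convexity between `X` and `x*` bounds by `-(μ / 2) ‖Z - X‖² ≤ 0`. -/

open scoped RealInnerProductSpace

noncomputable def sinhc (x : ℝ) : ℝ := if x = 0 then 1 else Real.sinh x / x
noncomputable def cschc (x : ℝ) : ℝ := 1 / sinhc x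
noncomputable def tanhc (x : ℝ) : ℝ := sinhc x / Real.cosh x
noncomputable def cothc (x : ℝ) : ℝ := 1 / tanhc x

open Real Set

lemma sinhc_pos (x : ℝ) : 0 < sinhc x := by
  unfold sinhc
  rcases lt_trichotomy x 0 with h | rfl | h
  · rw [if_neg h.ne]
    exact div_pos_of_neg_of_neg (sinh_neg_iff.2 h) h
  · simp
  · rw [if_neg h.ne']
    exact div_pos (sinh_pos_iff.2 h) h

lemma mul_sinhc (x : ℝ) : x * sinhc x = sinh x := by
  unfold sinhc
  split_ifs with h
  · simp [h]
  · field_simp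

lemma cothc_eq_cosh_div_sinhc (x : ℝ) : cothc x = cosh x / sinhc x := by
  simp [cothc, tanhc]

lemma hasDerivAt_half_mul_sinhc_mul (s t : ℝ) :
    HasDerivAt (fun t => t / 2 * sinhc (s * t)) (cosh (s * t) / 2) t := by
  rcases eq_or_ne s 0 with rfl | hs
  · simpa [sinhc] using (hasDerivAt_id t).div_const 2
  · have hA : (fun t => t / 2 * sinhc (s * t)) = fun t => sinh (s * t) / (2 * s) := by
      funext u
      rw [← mul_sinhc (s * u), eq_div_iff (by positivity)]
      ring
    rw [hA]
    refine (((hasDerivAt_id' t).const_mul s).sinh.div_const (2 * s)).congr_deriv ?_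
    field_simp

lemma hasDerivAt_cosh_mul (s t : ℝ) :
    HasDerivAt (fun t => cosh (s * t)) (2 * s ^ 2 * (t / 2 * sinhc (s * t))) t := by
  refine ((hasDerivAt_id' t).const_mul s).cosh.congr_deriv ?_
  rw [← mul_sinhc]
  ring

section Lyapunov

variable {E : Type*} [NormedAddCommGroup E] [InnerProductSpace ℝ E]

lemma lyapunov_rate_le_of_strongConvex {μ : ℝ} {f : E → ℝ} {g x y : E}
    (hsc : f x + ⟪g, y - x⟫ + μ / 2 * ‖y - x‖ ^ 2 ≤ f y) (z : E) :
    μ / 2 * ‖z - y‖ ^ 2 + ⟪μ • x - μ • z - g, z - y⟫ + (f x - f y) + ⟪g, z - x⟫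
      ≤ -(μ / 2) * ‖z - x‖ ^ 2 := by
  have hzx : ‖z - x‖ ^ 2 = ‖z - y‖ ^ 2 + 2 * ⟪z - y, y - x⟫ + ‖y - x‖ ^ 2 := by
    rw [← norm_add_sq_real]; abel_nf
  have hxz : ⟪x - z, z - y⟫ = -‖z - y‖ ^ 2 - ⟪z - y, y - x⟫ := by
    rw [show x - z = -((z - y) + (y - x)) by abel, inner_neg_left, inner_add_left,
      real_inner_self_eq_norm_sq, real_inner_comm]
    ring
  have hg : ⟪g, z - x⟫ - ⟪g, z - y⟫ = ⟪g, y - x⟫ := by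
    rw [← inner_sub_right]; congr 1; abel
  rw [← smul_sub, inner_sub_left, real_inner_smul_left, hxz]
  linear_combination hsc + μ / 2 * hzx + hg

variable [CompleteSpace E] {μ : ℝ} {f : E → ℝ} {xstar : E} {A C : ℝ → ℝ} {X Z : ℝ → E}

lemma hasDerivAt_energy {t : ℝ} (hA : HasDerivAt A (C t / 2) t)
    (hC : HasDerivAt C (μ / 2 * A t) t) (hA0 : A t ≠ 0) (hC0 : C t ≠ 0)
    (hf : DifferentiableAt ℝ f (X t))
    (hX : HasDerivAt X ((C t / A t) • (Z t - X t)) t)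
    (hZ : HasDerivAt Z ((A t / C t) • (μ • X t - μ • Z t - gradient f (X t))) t) :
    HasDerivAt (fun t => 1 / 2 * C t ^ 2 * ‖Z t - xstar‖ ^ 2 + A t ^ 2 * (f (X t) - f xstar))
      (A t * C t * (μ / 2 * ‖Z t - xstar‖ ^ 2
        + ⟪μ • X t - μ • Z t - gradient f (X t), Z t - xstar⟫
        + (f (X t) - f xstar) + ⟪gradient f (X t), Z t - X t⟫)) t := by
  have hfX : HasDerivAt (fun t => f (X t)) ⟪gradient f (X t), (C t / A t) • (Z t - X t)⟫ t :=
    hf.hasGradientAt.hasFDerivAt.comp_hasDerivAt t hX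
  refine ((((hC.pow 2).const_mul (1 / 2)).mul (hZ.sub_const xstar).norm_sq).add
    ((hA.pow 2).mul (hfX.sub_const (f xstar)))).congr_deriv ?_
  have hAA : A t * (A t)⁻¹ = 1 := mul_inv_cancel₀ hA0
  have hCC : C t * (C t)⁻¹ = 1 := mul_inv_cancel₀ hC0
  simp only [Pi.pow_apply, real_inner_smul_left, real_inner_smul_right,
    real_inner_comm _ (Z t - xstar), div_eq_mul_inv]
  linear_combination A t * C t * ⟪gradient f (X t), Z t - X t⟫ * hAA
    + A t * C t * ⟪μ • X t - μ • Z t - gradient f (X t), Z t - xstar⟫ * hCC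

theorem antitoneOn_energy (hμ : 0 ≤ μ) (hf : Differentiable ℝ f)
    (hsc : ∀ x y : E, f x + ⟪gradient f x, y - x⟫ + μ / 2 * ‖y - x‖ ^ 2 ≤ f y)
    (hA : ∀ t, HasDerivAt A (C t / 2) t) (hC : ∀ t, HasDerivAt C (μ / 2 * A t) t)
    (hApos : ∀ t > 0, 0 < A t) (hCpos : ∀ t > 0, 0 < C t)
    (hXc : ContinuousOn X (Ici 0)) (hZc : ContinuousOn Z (Ici 0))
    (hX : ∀ t > 0, HasDerivAt X ((C t / A t) • (Z t - X t)) t)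
    (hZ : ∀ t > 0, HasDerivAt Z ((A t / C t) • (μ • X t - μ • Z t - gradient f (X t))) t) :
    AntitoneOn (fun t => 1 / 2 * C t ^ 2 * ‖Z t - xstar‖ ^ 2 + A t ^ 2 * (f (X t) - f xstar))
      (Ici 0) := by
  have hAc : Continuous A := continuous_iff_continuousAt.2 fun t => (hA t).continuousAt
  have hCc : Continuous C := continuous_iff_continuousAt.2 fun t => (hC t).continuousAt
  have hderiv (t : ℝ) (ht : 0 < t) := hasDerivAt_energy (xstar := xstar) (hA t) (hC t)
    (hApos t ht).ne' (hCpos t ht).ne' (hf _) (hX t ht) (hZ t ht)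
  refine antitoneOn_of_deriv_nonpos (convex_Ici 0) ?_ ?_ ?_
  · exact ((continuousOn_const.mul (hCc.continuousOn.pow 2)).mul
      ((hZc.sub continuousOn_const).norm.pow 2)).add
      ((hAc.continuousOn.pow 2).mul ((hf.continuous.comp_continuousOn hXc).sub continuousOn_const))
  · rw [interior_Ici]
    exact fun t ht => (hderiv t ht).differentiableAt.differentiableWithinAt
  · rw [interior_Ici]
    intro t ht
    rw [(hderiv t ht).deriv]
    have hrate := lyapunov_rate_le_of_strongConvex (hsc (X t) xstar) (Z t)
    have hdist : 0 ≤ μ / 2 * ‖Z t - X t‖ ^ 2 := by positivity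
    exact mul_nonpos_of_nonneg_of_nonpos (mul_pos (hApos t ht) (hCpos t ht)).le (by linarith)

end Lyapunov

theorem unified_nag_system_lyapunov_general
    {E : Type*} [NormedAddCommGroup E] [InnerProductSpace ℝ E] [FiniteDimensional ℝ E]
    (μ : ℝ) (hμ : 0 ≤ μ)
    (f : E → ℝ) (hf : Differentiable ℝ f)
    (hsc : ∀ x y : E, f x + ⟪gradient f x, y - x⟫ + μ / 2 * ‖y - x‖ ^ 2 ≤ f y)
    (xstar : E)
    (X Z : ℝ → E)
    (hX : ContDiffOn ℝ 1 X (Set.Ici 0)) (hZ : ContDiffOn ℝ 1 Z (Set.Ici 0))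
    (hflow1 : ∀ t > (0 : ℝ),
      HasDerivAt X ((2 / t * cothc (Real.sqrt μ / 2 * t)) • (Z t - X t)) t)
    (hflow2 : ∀ t > (0 : ℝ),
      HasDerivAt Z ((t / 2 * tanhc (Real.sqrt μ / 2 * t)) •
        (μ • X t - μ • Z t - gradient f (X t))) t) :
    AntitoneOn (fun t =>
      1 / 2 * Real.cosh (Real.sqrt μ / 2 * t) ^ 2 * ‖Z t - xstar‖ ^ 2
        + t ^ 2 / 4 * sinhc (Real.sqrt μ / 2 * t) ^ 2 * (f (X t) - f xstar))
      (Set.Ici 0) := by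
  set s := Real.sqrt μ / 2
  have hμs : μ / 2 = 2 * s ^ 2 := by rw [div_pow, Real.sq_sqrt hμ]; ring
  have hC (t : ℝ) : HasDerivAt (fun t => cosh (s * t)) (μ / 2 * (t / 2 * sinhc (s * t))) t :=
    hμs ▸ hasDerivAt_cosh_mul s t
  convert antitoneOn_energy hμ hf hsc (hasDerivAt_half_mul_sinhc_mul s) hC (fun t ht => mul_pos (by positivity) (sinhc_pos _))
    (fun t _ => cosh_pos _) hX.continuousOn hZ.continuousOn (fun t ht => ?_) (fun t ht => ?_)
    using 2 with t
  · ring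
  · convert hflow1 t ht using 2
    rw [cothc_eq_cosh_div_sinhc]
    field_simp
  · convert hflow2 t ht using 3
    rw [tanhc]
    ring

/-- Along the unified NAG system, the energy
`𝓔(t) = (1/2)cosh²((√μ/2)t)‖Z(t) − x*‖² + (t²/4)sinhc²((√μ/2)t)(f(X(t)) − f(x*))`
is monotonically nonincreasing on `[0, ∞)`. -/
theorem unified_nag_system_lyapunov
    {E : Type*} [NormedAddCommGroup E] [InnerProductSpace ℝ E] [FiniteDimensional ℝ E]
    (μ : ℝ) (hμ : 0 ≤ μ)
    (f : E → ℝ) (hf : Differentiable ℝ f)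
    (hsc : ∀ x y : E, f x + ⟪gradient f x, y - x⟫ + μ / 2 * ‖y - x‖ ^ 2 ≤ f y)
    (xstar : E) (hmin : ∀ x, f xstar ≤ f x)
    (X Z : ℝ → E)
    (hX : ContDiffOn ℝ 1 X (Set.Ici 0)) (hZ : ContDiffOn ℝ 1 Z (Set.Ici 0))
    (hflow1 : ∀ t > (0 : ℝ),
      HasDerivAt X ((2 / t * cothc (Real.sqrt μ / 2 * t)) • (Z t - X t)) t)
    (hflow2 : ∀ t > (0 : ℝ),
      HasDerivAt Z ((t / 2 * tanhc (Real.sqrt μ / 2 * t)) •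
        (μ • X t - μ • Z t - gradient f (X t))) t) :
    AntitoneOn (fun t =>
      1 / 2 * Real.cosh (Real.sqrt μ / 2 * t) ^ 2 * ‖Z t - xstar‖ ^ 2
        + t ^ 2 / 4 * sinhc (Real.sqrt μ / 2 * t) ^ 2 * (f (X t) - f xstar))
      (Set.Ici 0) :=
  unified_nag_system_lyapunov_general μ hμ f hf hsc xstar X Z hX hZ hflow1 hflow2
end

section
/- Let p ≥ 2 be a real number and let S : [0,∞) → ℝ be differentiable with S(0) = 0 and S′(t) = (1 + S(t)^p)^{1/p} for all t ≥ 0. Then there exists a constant C_p > 0 such that S(t)/e^t → C_p as t → ∞ (i.e., S(t) is asymptotically equivalent to C_p·e^t). In particular, for p = 2 one has C_p = 1/2. -/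
/-!
For `S ≥ 0` the right-hand side satisfies `max 1 S ≤ (1 + S ^ p) ^ (1 / p) ≤ 1 + S`. The lower
bound makes `S t * exp (-t)` nondecreasing and gives `S t ≥ t`; the upper bound makes
`(S t + 1) * exp (-t)` nonincreasing, so `S t * exp (-t)` increases to a limit in `(0, 1]`.
For `p = 2` the right-hand side `√(1 + S ^ 2)` is Lipschitz, so `S = sinh` by uniqueness of
solutions, and `sinh t / exp t → 1 / 2`.
-/

open Real Set Filter Topology

-- For `y < 0`, `Real.rpow` gives `y ^ (1 / p) = exp (log y / p) * cos (π / p)`.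
lemma rpow_one_div_nonneg_of_two_le {p : ℝ} (hp : 2 ≤ p) (y : ℝ) : 0 ≤ y ^ (1 / p) := by
  rcases le_or_gt 0 y with hy | hy
  · exact rpow_nonneg hy _
  rw [rpow_def_of_neg hy]
  have : 0 ≤ cos (1 / p * π) := by
    refine cos_nonneg_of_mem_Icc ⟨by nlinarith [pi_pos, one_div_pos.2 (by linarith : 0 < p)], ?_⟩
    have : 1 / p ≤ 1 / 2 := one_div_le_one_div_of_le two_pos hp
    nlinarith [pi_pos]
  positivity

lemma one_le_one_add_rpow_rpow_one_div {p x : ℝ} (hp : 0 < p) (hx : 0 ≤ x) :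
    1 ≤ (1 + x ^ p) ^ (1 / p) :=
  one_le_rpow (by linarith [rpow_nonneg hx p]) (by positivity)

lemma le_one_add_rpow_rpow_one_div {p x : ℝ} (hp : 0 < p) (hx : 0 ≤ x) :
    x ≤ (1 + x ^ p) ^ (1 / p) := by
  calc x = (x ^ p) ^ (1 / p) := by rw [one_div, rpow_rpow_inv hx hp.ne']
    _ ≤ (1 + x ^ p) ^ (1 / p) := by gcongr; linarith

lemma one_add_rpow_rpow_one_div_le {p x : ℝ} (hp : 1 ≤ p) (hx : 0 ≤ x) :
    (1 + x ^ p) ^ (1 / p) ≤ 1 + x := by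
  have h := NNReal.rpow_add_rpow_le_add 1 x.toNNReal hp
  rw [← NNReal.coe_le_coe] at h
  push_cast [Real.coe_toNNReal x hx, Real.one_rpow] at h
  exact h

lemma monotoneOn_Ici_of_hasDerivWithinAt_nonneg {f f' : ℝ → ℝ} {a : ℝ}
    (hf : ∀ t ∈ Ici a, HasDerivWithinAt f (f' t) (Ici a) t) (hf' : ∀ t ∈ Ioi a, 0 ≤ f' t) :
    MonotoneOn f (Ici a) := by
  refine monotoneOn_of_hasDerivWithinAt_nonneg (convex_Ici a)
    (fun t ht => (hf t ht).continuousWithinAt) ?_ (by rwa [interior_Ici])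
  rw [interior_Ici]
  exact fun t ht => (hf t (Ioi_subset_Ici_self ht)).mono Ioi_subset_Ici_self

lemma antitoneOn_Ici_of_hasDerivWithinAt_nonpos {f f' : ℝ → ℝ} {a : ℝ}
    (hf : ∀ t ∈ Ici a, HasDerivWithinAt f (f' t) (Ici a) t) (hf' : ∀ t ∈ Ioi a, f' t ≤ 0) :
    AntitoneOn f (Ici a) := by
  refine antitoneOn_of_hasDerivWithinAt_nonpos (convex_Ici a)
    (fun t ht => (hf t ht).continuousWithinAt) ?_ (by rwa [interior_Ici])
  rw [interior_Ici]
  exact fun t ht => (hf t (Ioi_subset_Ici_self ht)).mono Ioi_subset_Ici_self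

lemma MonotoneOn.exists_tendsto_atTop_of_bddAbove {f : ℝ → ℝ} {a : ℝ}
    (hf : MonotoneOn f (Ici a)) (hbdd : BddAbove (f '' Ici a)) :
    ∃ L, (∀ t ∈ Ici a, f t ≤ L) ∧ Tendsto f atTop (𝓝 L) := by
  set g := fun t => f (max t a)
  have hg : Monotone g := fun s t hst =>
    hf (le_max_right s a) (le_max_right t a) (max_le_max_right a hst)
  have hgbdd : BddAbove (range g) :=
    hbdd.mono (range_subset_iff.2 fun t => mem_image_of_mem f (le_max_right t a))
  refine ⟨⨆ t, g t, fun t ht => ?_, (tendsto_atTop_ciSup hg hgbdd).congr' ?_⟩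
  · simpa [g, max_eq_left (mem_Ici.1 ht)] using le_ciSup hgbdd t
  · filter_upwards [eventually_ge_atTop a] with t ht
    simp [g, max_eq_left ht]

lemma lipschitzWith_sqrt_one_add_sq : LipschitzWith 1 (fun x : ℝ => √(1 + x ^ 2)) := by
  refine LipschitzWith.of_dist_le_mul fun x y => ?_
  have hnorm (z : ℝ) : √(1 + z ^ 2) = ‖((1 : ℝ) : ℂ) + z * Complex.I‖ := by
    rw [Complex.norm_add_mul_I, one_pow]
  simp only [hnorm, NNReal.coe_one, one_mul, dist_eq]
  calc _ ≤ ‖(((1 : ℝ) : ℂ) + x * Complex.I) - (((1 : ℝ) : ℂ) + y * Complex.I)‖ :=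
        abs_norm_sub_norm_le _ _
    _ = |x - y| := by
        rw [add_sub_add_left_eq_sub, ← sub_mul, norm_mul, Complex.norm_I, mul_one,
          ← Complex.ofReal_sub, Complex.norm_real, Real.norm_eq_abs]

lemma tendsto_sinh_div_exp : Tendsto (fun t => sinh t / exp t) atTop (𝓝 (1 / 2)) := by
  have h (t : ℝ) : sinh t / exp t = (1 - exp (-t) * exp (-t)) / 2 := by
    rw [sinh_eq, exp_neg]
    field_simp
  simp only [h]
  have := tendsto_exp_neg_atTop_nhds_zero
  simpa using ((this.mul this).const_sub 1).div_const 2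

structure IsSinhp (p : ℝ) (S : ℝ → ℝ) : Prop where
  map_zero : S 0 = 0
  hasDerivWithinAt : ∀ t ∈ Ici (0 : ℝ), HasDerivWithinAt S ((1 + S t ^ p) ^ (1 / p)) (Ici 0) t

namespace IsSinhp

variable {p : ℝ} {S : ℝ → ℝ}

lemma monotoneOn (h : IsSinhp p S) (hp : 2 ≤ p) : MonotoneOn S (Ici 0) :=
  monotoneOn_Ici_of_hasDerivWithinAt_nonneg h.hasDerivWithinAt fun _ _ =>
    rpow_one_div_nonneg_of_two_le hp _

lemma nonneg (h : IsSinhp p S) (hp : 2 ≤ p) {t : ℝ} (ht : 0 ≤ t) : 0 ≤ S t :=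
  h.map_zero ▸ h.monotoneOn hp self_mem_Ici ht ht

lemma self_le (h : IsSinhp p S) (hp : 2 ≤ p) {t : ℝ} (ht : 0 ≤ t) : t ≤ S t := by
  have hmono : MonotoneOn (fun t => S t - t) (Ici 0) :=
    monotoneOn_Ici_of_hasDerivWithinAt_nonneg
      (fun t ht => (h.hasDerivWithinAt t ht).sub (hasDerivWithinAt_id t _))
      fun t ht => sub_nonneg.2 <|
        one_le_one_add_rpow_rpow_one_div (by linarith) (h.nonneg hp (le_of_lt ht))
  simpa [h.map_zero] using hmono self_mem_Ici ht ht

lemma hasDerivWithinAt_add_const_mul_exp_neg (h : IsSinhp p S) (c : ℝ) {t : ℝ} (ht : 0 ≤ t) :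
    HasDerivWithinAt (fun t => (S t + c) * exp (-t))
      (((1 + S t ^ p) ^ (1 / p) - (S t + c)) * exp (-t)) (Ici 0) t :=
  (((h.hasDerivWithinAt t ht).add_const c).mul
    ((hasDerivAt_neg t).exp.hasDerivWithinAt)).congr_deriv (by ring)

lemma monotoneOn_mul_exp_neg (h : IsSinhp p S) (hp : 2 ≤ p) :
    MonotoneOn (fun t => S t * exp (-t)) (Ici 0) := by
  simpa using monotoneOn_Ici_of_hasDerivWithinAt_nonneg
    (fun t ht => h.hasDerivWithinAt_add_const_mul_exp_neg 0 ht) fun t ht => by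
      have := le_one_add_rpow_rpow_one_div (by linarith) (h.nonneg hp (le_of_lt ht))
      rw [add_zero]
      exact mul_nonneg (by linarith) (exp_pos _).le

lemma mul_exp_neg_le_one (h : IsSinhp p S) (hp : 2 ≤ p) {t : ℝ} (ht : 0 ≤ t) :
    S t * exp (-t) ≤ 1 := by
  have hanti : AntitoneOn (fun t => (S t + 1) * exp (-t)) (Ici 0) :=
    antitoneOn_Ici_of_hasDerivWithinAt_nonpos
      (fun t ht => h.hasDerivWithinAt_add_const_mul_exp_neg 1 ht) fun t ht => by
        have := one_add_rpow_rpow_one_div_le (by linarith : (1 : ℝ) ≤ p)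
          (h.nonneg hp (le_of_lt ht))
        exact mul_nonpos_of_nonpos_of_nonneg (by linarith) (exp_pos _).le
  have := hanti self_mem_Ici ht ht
  simp only [h.map_zero, zero_add, neg_zero, exp_zero, mul_one, add_mul, one_mul] at this
  linarith [exp_pos (-t)]

lemma exists_tendsto_div_exp (h : IsSinhp p S) (hp : 2 ≤ p) :
    ∃ C, 0 < C ∧ Tendsto (fun t => S t / exp t) atTop (𝓝 C) := by
  obtain ⟨C, hle, hlim⟩ := (h.monotoneOn_mul_exp_neg hp).exists_tendsto_atTop_of_bddAbove
    ⟨1, forall_mem_image.2 fun t ht => h.mul_exp_neg_le_one hp ht⟩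
  refine ⟨C, ?_, by simpa only [exp_neg, div_eq_mul_inv] using hlim⟩
  calc 0 < S 1 * exp (-1) := mul_pos (by linarith [h.self_le hp zero_le_one]) (exp_pos _)
    _ ≤ C := hle 1 (by norm_num)

lemma eqOn_sinh (h : IsSinhp 2 S) : EqOn S sinh (Ici 0) := by
  have hsqrt (x : ℝ) : (1 + x ^ (2 : ℝ)) ^ (1 / (2 : ℝ)) = √(1 + x ^ 2) := by
    rw [rpow_two, sqrt_eq_rpow]
  intro t ht
  refine ODE_solution_unique (v := fun _ x => √(1 + x ^ 2))
    (fun _ => lipschitzWith_sqrt_one_add_sq)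
    (fun s hs => (h.hasDerivWithinAt s hs.1).continuousWithinAt.mono Icc_subset_Ici_self)
    (fun s hs => ?_) continuous_sinh.continuousOn (fun s _ => ?_) (by simp [h.map_zero])
    ⟨ht, le_rfl⟩
  · rw [← hsqrt]
    exact (h.hasDerivWithinAt s hs.1).mono (Ici_subset_Ici.2 hs.1)
  · rw [← cosh_sq', sqrt_sq (cosh_pos s).le]
    exact (hasDerivAt_sinh s).hasDerivWithinAt

end IsSinhp

/-- The order-`p` hyperbolic sine grows exponentially: if `S(0) = 0` and
`S′(t) = (1 + S(t)^p)^{1/p}` on `[0, ∞)`, then there is a constant `C_p > 0` such that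
`S(t)/e^t → C_p` as `t → ∞`; moreover `C_p = 1/2` when `p = 2`. -/
theorem sinhp_grows_exponentially
    (p : ℝ) (hp : 2 ≤ p)
    (S : ℝ → ℝ) (hS0 : S 0 = 0)
    (hS : ∀ t ∈ Set.Ici (0 : ℝ),
      HasDerivWithinAt S ((1 + S t ^ p) ^ (1 / p)) (Set.Ici 0) t) :
    ∃ C : ℝ, 0 < C ∧
      Filter.Tendsto (fun t => S t / Real.exp t) Filter.atTop (nhds C) ∧
      (p = 2 → C = 1 / 2) := by
  have hsol : IsSinhp p S := ⟨hS0, hS⟩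
  obtain ⟨C, hC, hlim⟩ := hsol.exists_tendsto_div_exp hp
  refine ⟨C, hC, hlim, ?_⟩
  rintro rfl
  refine tendsto_nhds_unique hlim (tendsto_sinh_div_exp.congr' ?_)
  filter_upwards [eventually_ge_atTop 0] with t ht
  rw [hsol.eqOn_sinh ht]
end

section
/- Let E be a finite-dimensional real inner product space, p ≥ 2 a real number, C > 0, μ ≥ 0, x₀ ∈ E. Let S : [0,∞) → ℝ be differentiable with S(0) = 0 and S′(t) = (1 + S(t)^p)^{1/p}, and define cosh_p(x) = (1 + S(x)^p)^{1/p}, sinhc_p(x) = S(x)/x for x > 0 with sinhc_p(0) = 1, tanhc_p(x) = sinhc_p(x)/cosh_p(x), cothc_p(x) = 1/tanhc_p(x). Let h : E → ℝ be convex and differentiable, f : E → ℝ differentiable and μ-uniformly convex with respect to h, and x* a minimizer of f. Suppose X, Z : [0,∞) → E are continuous with X(0) = Z(0) = x₀, X is differentiable and t ↦ ∇h(Z(t)) is differentiable on (0,∞), and for all t > 0: Ẋ(t) = (p/t)·cothc_p(C^{1/p}·μ^{1/p}·t)·(Z(t) − X(t)) and d/dt[∇h(Z(t))] = C·p·t^{p−1}·tanhc_p(C^{1/p}·μ^{1/p}·t)^{p−1}·(μ·∇h(X(t))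 − μ·∇h(Z(t)) − ∇f(X(t))). Then for all t > 0, f(X(t)) − f(x*) ≤ D_h(x*, x₀) / (C·t^p·sinhc_p(C^{1/p}·μ^{1/p}·t)^p). -/
/-!
Along the flow, the energy `E(t) = A(t) (f(X t) - f x*) + (1 + μ A(t)) D_h(x*, Z t)` with
`A(t) = C t^p sinhc_p(λ t)^p`, `λ = (C μ)^{1/p}`, is nonincreasing. Writing
`u(t) = t sinhc_p(λ t) = sinh_p(λ t) / λ`, one has `u' = cosh_p(λ t)` and
`cosh_p(λ t)^p = 1 + μ C u^p`, so `A = C u^p` satisfies `A' = A β = (1 + μ A) γ` for the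
coefficients `β`, `γ` of the two flow equations; the three-point identity for `D_h` and the
`μ`-uniform convexity of `f` then give `E' ≤ 0`. Only `∇h ∘ Z` is differentiable, so the
derivative of `D_h(x*, Z t)` is obtained by squeezing with the gradient inequality of `h`.
As `t → 0⁺`, `A(t) → 0` and `D_h(x*, ·)` is upper semicontinuous, whence
`A(t) (f(X t) - f x*) ≤ E(t) ≤ D_h(x*, x₀)`.
-/

open scoped RealInnerProductSpace

open Filter Set Topology Asymptotics

section Bregman

variable {E : Type*} [NormedAddCommGroup E] [InnerProductSpace ℝ E]

lemma hasDerivAt_of_neg_inner_le_sub_le {φ : ℝ → ℝ} {G Z : ℝ → E} {G' : E} {t : ℝ}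
    (hG : HasDerivAt G G' t) (hZ : ContinuousAt Z t)
    (hlo : ∀ q, -⟪G q - G t, Z q⟫ ≤ φ q - φ t) (hhi : ∀ q, φ q - φ t ≤ -⟪G q - G t, Z t⟫) :
    HasDerivAt φ (-⟪G', Z t⟫) t := by
  have hZo : (fun q => Z q - Z t) =o[𝓝 t] (fun _ => (1 : ℝ)) :=
    (isLittleO_one_iff ℝ).2 (by simpa using hZ.tendsto.sub_const (Z t))
  have hrem : (fun q => φ q - φ t + ⟪G q - G t, Z t⟫) =o[𝓝 t] (fun q => q - t) := by
    refine IsBigO.trans_isLittleO (g := fun q => ‖G q - G t‖ * ‖Z q - Z t‖) ?_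
      (by simpa using hG.isBigO_sub.norm_left.mul_isLittleO hZo.norm_left)
    refine IsBigO.of_bound 1 (Eventually.of_forall fun q => ?_)
    have hcs := real_inner_le_norm (G q - G t) (Z q - Z t)
    rw [inner_sub_right] at hcs
    rw [one_mul, norm_mul, norm_norm, norm_norm, Real.norm_eq_abs, abs_le]
    constructor <;> linarith [hlo q, hhi q]
  have hlin : (fun q => ⟪G q - G t - (q - t) • G', Z t⟫) =o[𝓝 t] (fun q => q - t) := by
    refine IsBigO.trans_isLittleO ?_ (hasDerivAt_iff_isLittleO.1 hG)
    refine IsBigO.of_bound ‖Z t‖ (Eventually.of_forall fun q => ?_)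
    rw [Real.norm_eq_abs, mul_comm]
    exact abs_real_inner_le_norm _ _
  rw [hasDerivAt_iff_isLittleO]
  refine (hrem.sub hlin).congr_left fun q => ?_
  simp only [inner_sub_left, real_inner_smul_left, smul_eq_mul]
  ring

variable [CompleteSpace E] {h : E → ℝ}

lemma DifferentiableAt.hasLineDerivAt_inner_gradient {x : E} (hx : DifferentiableAt ℝ h x)
    (v : E) : HasLineDerivAt ℝ h ⟪gradient h x, v⟫ x v := by
  simpa using hx.hasGradientAt.hasFDerivAt.hasLineDerivAt v

lemma ConvexOn.add_inner_gradient_le (hconv : ConvexOn ℝ univ h) {x : E}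
    (hx : DifferentiableAt ℝ h x) (y : E) : h x + ⟪gradient h x, y - x⟫ ≤ h y := by
  have hslope := (hx.hasLineDerivAt_inner_gradient (y - x)).tendsto_slope_zero_right
  have hchord : ∀ s ∈ Ioo (0 : ℝ) 1, s⁻¹ • (h (x + s • (y - x)) - h x) ≤ h y - h x := by
    rintro s ⟨hs0, hs1⟩
    have hcomb := hconv.2 (mem_univ x) (mem_univ y) (sub_nonneg.2 hs1.le) hs0.le
      (sub_add_cancel 1 s)
    have hpt : (1 - s) • x + s • y = x + s • (y - x) := by module
    rw [hpt, smul_eq_mul, smul_eq_mul] at hcomb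
    rw [smul_eq_mul, inv_mul_le_iff₀ hs0]
    linarith
  have := le_of_tendsto hslope (eventually_of_mem (Ioo_mem_nhdsGT one_pos) hchord)
  linarith

lemma breg_nonneg (hconv : ConvexOn ℝ univ h) (hdiff : Differentiable ℝ h) (y x : E) :
    0 ≤ breg h y x := by
  have := hconv.add_inner_gradient_le (hdiff x) y
  rw [breg]
  linarith

lemma breg_sub_breg_sub_breg (h : E → ℝ) (a z x : E) :
    breg h a x - breg h a z - breg h z x = ⟪gradient h z - gradient h x, a - z⟫ := by
  simp only [breg, inner_sub_left, inner_sub_right]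
  ring

/-- `Z` need not be differentiable: `h ∘ Z - ⟪∇h ∘ Z, Z⟫` is squeezed by the gradient
inequality of `h` at `Z q` and at `Z t`. -/
lemma hasDerivAt_breg_comp (hconv : ConvexOn ℝ univ h) (hdiff : Differentiable ℝ h) (a : E)
    {Z : ℝ → E} {G' : E} {t : ℝ} (hZ : ContinuousAt Z t)
    (hG : HasDerivAt (fun τ => gradient h (Z τ)) G' t) :
    HasDerivAt (fun τ => breg h a (Z τ)) (-⟪G', a - Z t⟫) t := by
  have hconj : HasDerivAt (fun τ => h (Z τ) - ⟪gradient h (Z τ), Z τ⟫) (-⟪G', Z t⟫) t := by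
    refine hasDerivAt_of_neg_inner_le_sub_le hG hZ (fun q => ?_) (fun q => ?_)
    · have := hconv.add_inner_gradient_le (hdiff (Z t)) (Z q)
      simp only [inner_sub_left, inner_sub_right] at this ⊢
      linarith
    · have := hconv.add_inner_gradient_le (hdiff (Z q)) (Z t)
      simp only [inner_sub_left, inner_sub_right] at this ⊢
      linarith
  have hpair : HasDerivAt (fun τ => ⟪gradient h (Z τ), a⟫) ⟪G', a⟫ t := by
    simpa using hG.inner ℝ (hasDerivAt_const t a)
  have hsplit : (fun τ => breg h a (Z τ)) =
      fun τ => h a - ⟪gradient h (Z τ), a⟫ - (h (Z τ) - ⟪gradient h (Z τ), Z τ⟫) := by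
    ext τ
    simp only [breg, inner_sub_right]
    ring
  rw [hsplit]
  refine (((hasDerivAt_const t (h a)).sub hpair).sub hconj).congr_deriv ?_
  simp only [inner_sub_right]
  ring

/-- By convexity, `⟪∇h z, z - a⟫` is the infimum over `ε > 0` of the difference quotients
`(h (z + ε (z - a)) - h z) / ε`, each continuous in `z`. -/
lemma upperSemicontinuous_breg (hconv : ConvexOn ℝ univ h) (hdiff : Differentiable ℝ h)
    (a : E) : UpperSemicontinuous (breg h a) := by
  intro z y hy
  have hbreg : ∀ w, breg h a w = h a - h w + ⟪gradient h w, w - a⟫ := fun w => by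
    rw [breg, ← neg_sub w a, inner_neg_right]
    ring
  have hslope := ((hdiff z).hasLineDerivAt_inner_gradient (z - a)).tendsto_slope_zero_right
  rw [hbreg] at hy
  obtain ⟨ε, hεy, hε⟩ := (((tendsto_const_nhds (x := h a - h z)).add hslope).eventually
    (gt_mem_nhds hy) |>.and self_mem_nhdsWithin).exists
  have hcont : Continuous fun w => h a - h w + ε⁻¹ • (h (w + ε • (w - a)) - h w) := by
    have := hdiff.continuous
    fun_prop
  filter_upwards [hcont.continuousAt.eventually (gt_mem_nhds hεy)] with w hw
  have hchord := hconv.add_inner_gradient_le (hdiff w) (w + ε • (w - a))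
  rw [add_sub_cancel_left, real_inner_smul_right] at hchord
  have hdir : ⟪gradient h w, w - a⟫ ≤ ε⁻¹ • (h (w + ε • (w - a)) - h w) := by
    rw [smul_eq_mul, le_inv_mul_iff₀ (mem_Ioi.1 hε)]
    linarith
  rw [hbreg]
  linarith

end Bregman

section Lyapunov

variable {E : Type*} [NormedAddCommGroup E] [InnerProductSpace ℝ E] [CompleteSpace E]
  {h f : E → ℝ} {μ : ℝ} {xstar : E} {A β γ : ℝ → ℝ} {X Z : ℝ → E}

noncomputable def lyapunovEnergy (h f : E → ℝ) (μ : ℝ) (xstar : E) (A : ℝ → ℝ) (X Z : ℝ → E)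
    (t : ℝ) : ℝ :=
  A t * (f (X t) - f xstar) + (1 + μ * A t) * breg h xstar (Z t)

lemma lyapunov_rate_nonpos (hμ : 0 ≤ μ) (hconv : ConvexOn ℝ univ h) (hdiff : Differentiable ℝ h)
    {x : E} (hunif : μ * breg h xstar x ≤ breg f xstar x) (z : E) :
    f x - f xstar + ⟪gradient f x, z - x⟫ + μ * breg h xstar z
      - ⟪μ • gradient h x - μ • gradient h z - gradient f x, xstar - z⟫ ≤ 0 := by
  have hthree := breg_sub_breg_sub_breg h xstar z x
  have hzx := mul_nonneg hμ (breg_nonneg hconv hdiff z x)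
  have hf : breg f xstar x = f xstar - f x - ⟪gradient f x, xstar - x⟫ := rfl
  simp only [hf, inner_sub_left, inner_sub_right, real_inner_smul_left] at hthree hunif ⊢
  linear_combination hunif + hzx - μ * hthree

/-- Conditions on the rate `A` and the coefficients `β`, `γ` of the flow
`Ẋ = β (Z - X)`, `d/dt ∇h(Z) = γ (μ ∇h(X) - μ ∇h(Z) - ∇f(X))` under which
`lyapunovEnergy` is nonincreasing. -/
structure LyapunovScaling (μ : ℝ) (A β γ : ℝ → ℝ) : Prop where
  tendsto_zero : Tendsto A (𝓝[>] 0) (𝓝 0)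
  pos : ∀ t > 0, 0 < A t
  hasDerivAt : ∀ t > 0, HasDerivAt A (A t * β t) t
  mul_eq : ∀ t > 0, A t * β t = (1 + μ * A t) * γ t
  nonneg : ∀ t > 0, 0 ≤ β t

namespace LyapunovScaling

lemma hasDerivAt_lyapunovEnergy (hs : LyapunovScaling μ A β γ) (hconv : ConvexOn ℝ univ h)
    (hdiff : Differentiable ℝ h) (hfdiff : Differentiable ℝ f) {t : ℝ} (ht : 0 < t)
    (hZ : ContinuousAt Z t)
    (hX : HasDerivAt X (β t • (Z t - X t)) t)
    (hG : HasDerivAt (fun τ => gradient h (Z τ))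
      (γ t • (μ • gradient h (X t) - μ • gradient h (Z t) - gradient f (X t))) t) :
    HasDerivAt (lyapunovEnergy h f μ xstar A X Z) (A t * β t *
      (f (X t) - f xstar + ⟪gradient f (X t), Z t - X t⟫ + μ * breg h xstar (Z t)
        - ⟪μ • gradient h (X t) - μ • gradient h (Z t) - gradient f (X t), xstar - Z t⟫)) t := by
  have hF : HasDerivAt (fun τ => f (X τ) - f xstar) ⟪gradient f (X t), β t • (Z t - X t)⟫ t := by
    have := (hfdiff (X t)).hasGradientAt.hasFDerivAt.comp_hasDerivAt t hX
    simpa using this.sub_const (f xstar)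
  have hD := hasDerivAt_breg_comp hconv hdiff xstar hZ hG
  have hA := hs.hasDerivAt t ht
  refine ((hA.mul hF).add (((hA.const_mul μ).const_add 1).mul hD)).congr_deriv ?_
  rw [real_inner_smul_right, real_inner_smul_left]
  linear_combination ⟪μ • gradient h (X t) - μ • gradient h (Z t) - gradient f (X t),
    xstar - Z t⟫ * hs.mul_eq t ht

lemma antitoneOn_lyapunovEnergy (hs : LyapunovScaling μ A β γ) (hμ : 0 ≤ μ)
    (hconv : ConvexOn ℝ univ h) (hdiff : Differentiable ℝ h) (hfdiff : Differentiable ℝ f)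
    (hunif : ∀ x y : E, μ * breg h x y ≤ breg f x y) (hZ : ContinuousOn Z (Ioi 0))
    (hflow1 : ∀ t > (0 : ℝ), HasDerivAt X (β t • (Z t - X t)) t)
    (hflow2 : ∀ t > (0 : ℝ), HasDerivAt (fun τ => gradient h (Z τ))
      (γ t • (μ • gradient h (X t) - μ • gradient h (Z t) - gradient f (X t))) t) :
    AntitoneOn (lyapunovEnergy h f μ xstar A X Z) (Ioi 0) := by
  have hderiv := fun t (ht : 0 < t) => hs.hasDerivAt_lyapunovEnergy (xstar := xstar) hconv hdiff
    hfdiff ht (hZ.continuousAt (Ioi_mem_nhds ht)) (hflow1 t ht) (hflow2 t ht)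
  refine antitoneOn_of_deriv_nonpos (convex_Ioi 0)
    (fun t ht => (hderiv t ht).continuousAt.continuousWithinAt) (fun t ht => ?_) (fun t ht => ?_)
  · rw [interior_Ioi] at ht
    exact (hderiv t ht).differentiableAt.differentiableWithinAt
  · rw [interior_Ioi] at ht
    rw [(hderiv t ht).deriv]
    exact mul_nonpos_of_nonneg_of_nonpos (mul_nonneg (hs.pos t ht).le (hs.nonneg t ht))
      (lyapunov_rate_nonpos hμ hconv hdiff (hunif xstar (X t)) (Z t))

lemma eventually_lyapunovEnergy_lt (hs : LyapunovScaling μ A β γ) (hμ : 0 ≤ μ)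
    (hconv : ConvexOn ℝ univ h) (hdiff : Differentiable ℝ h) (hfcont : Continuous f)
    (hX : ContinuousWithinAt X (Ici 0) 0) (hZ : ContinuousWithinAt Z (Ici 0) 0) {y : ℝ}
    (hy : breg h xstar (Z 0) < y) :
    ∀ᶠ s in 𝓝[>] 0, lyapunovEnergy h f μ xstar A X Z s < y := by
  obtain ⟨y', hy', hy'y⟩ := exists_between hy
  have hX' := hX.tendsto.mono_left (nhdsWithin_mono _ Ioi_subset_Ici_self)
  have hZ' := hZ.tendsto.mono_left (nhdsWithin_mono _ Ioi_subset_Ici_self)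
  have hD := hZ'.eventually (upperSemicontinuous_breg hconv hdiff xstar (Z 0) y' hy')
  have hbound : Tendsto (fun s => A s * (f (X s) - f xstar) + (1 + μ * A s) * y')
      (𝓝[>] 0) (𝓝 y') := by
    have hfX := ((hfcont.tendsto _).comp hX').sub_const (f xstar)
    simpa using (hs.tendsto_zero.mul hfX).add
      (((hs.tendsto_zero.const_mul μ).const_add 1).mul_const y')
  filter_upwards [hD, hbound.eventually (gt_mem_nhds hy'y), self_mem_nhdsWithin] with s hDs hbs hs0
  have hcoef : 0 ≤ 1 + μ * A s := by nlinarith [hs.pos s hs0]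
  rw [lyapunovEnergy]
  nlinarith [mul_le_mul_of_nonneg_left hDs.le hcoef]

theorem mul_sub_le_breg (hs : LyapunovScaling μ A β γ) (hμ : 0 ≤ μ)
    (hconv : ConvexOn ℝ univ h) (hdiff : Differentiable ℝ h) (hfdiff : Differentiable ℝ f)
    (hunif : ∀ x y : E, μ * breg h x y ≤ breg f x y)
    (hX : ContinuousWithinAt X (Ici 0) 0) (hZ : ContinuousOn Z (Ici 0))
    (hflow1 : ∀ t > (0 : ℝ), HasDerivAt X (β t • (Z t - X t)) t)
    (hflow2 : ∀ t > (0 : ℝ), HasDerivAt (fun τ => gradient h (Z τ))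
      (γ t • (μ • gradient h (X t) - μ • gradient h (Z t) - gradient f (X t))) t)
    {t : ℝ} (ht : 0 < t) :
    A t * (f (X t) - f xstar) ≤ breg h xstar (Z 0) := by
  have hanti := hs.antitoneOn_lyapunovEnergy (xstar := xstar) hμ hconv hdiff hfdiff hunif
    (hZ.mono Ioi_subset_Ici_self) hflow1 hflow2
  have hcoef : 0 ≤ 1 + μ * A t := by nlinarith [hs.pos t ht]
  have hEt : A t * (f (X t) - f xstar) ≤ lyapunovEnergy h f μ xstar A X Z t :=
    le_add_of_nonneg_right (mul_nonneg hcoef (breg_nonneg hconv hdiff _ _))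
  refine hEt.trans (le_of_forall_gt fun y hy => ?_)
  obtain ⟨s, hEs, hs0, hst⟩ := (hs.eventually_lyapunovEnergy_lt hμ hconv hdiff hfdiff.continuous
    hX (hZ 0 self_mem_Ici) hy |>.and (Ioo_mem_nhdsGT ht)).exists
  exact (hanti hs0 ht hst.le).trans_lt hEs

end LyapunovScaling

end Lyapunov

namespace LyapunovScaling

variable {μ : ℝ} {A β γ : ℝ → ℝ}

lemma congr {A' β' γ' : ℝ → ℝ} (hs : LyapunovScaling μ A β γ) (hA : EqOn A' A (Ioi 0))
    (hβ : EqOn β' β (Ioi 0)) (hγ : EqOn γ' γ (Ioi 0)) : LyapunovScaling μ A' β' γ' where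
  tendsto_zero := hs.tendsto_zero.congr' (eventually_nhdsWithin_of_forall fun t ht => (hA ht).symm)
  pos t ht := hA ht ▸ hs.pos t ht
  hasDerivAt t ht := by
    rw [hA ht, hβ ht]
    exact (hs.hasDerivAt t ht).congr_of_eventuallyEq (eventually_of_mem (Ioi_mem_nhds ht) hA)
  mul_eq t ht := by rw [hA ht, hβ ht, hγ ht, hs.mul_eq t ht]
  nonneg t ht := hβ ht ▸ hs.nonneg t ht

lemma of_rpow {p C : ℝ} {u c : ℝ → ℝ} (hp : 0 < p) (hC : 0 < C)
    (hu0 : Tendsto u (𝓝[>] 0) (𝓝 0)) (hu : ∀ t > 0, 0 < u t)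
    (hu' : ∀ t > 0, HasDerivAt u (c t) t) (hc : ∀ t > 0, 0 < c t)
    (hcp : ∀ t > 0, c t ^ p = 1 + μ * (C * u t ^ p)) :
    LyapunovScaling μ (fun t => C * u t ^ p) (fun t => p * c t / u t)
      (fun t => C * p * (u t / c t) ^ (p - 1)) where
  tendsto_zero := by
    have hpow := (Real.continuousAt_rpow_const 0 p (Or.inr hp.le)).tendsto.comp hu0
    simpa [Real.zero_rpow hp.ne'] using hpow.const_mul C
  pos t ht := mul_pos hC (Real.rpow_pos_of_pos (hu t ht) p)
  hasDerivAt t ht := by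
    have hut := hu t ht
    refine (((Real.hasDerivAt_rpow_const (Or.inl hut.ne')).comp t (hu' t ht)).const_mul C
      ).congr_deriv ?_
    rw [Real.rpow_sub_one hut.ne']
    field_simp
  mul_eq t ht := by
    have hut := hu t ht
    have hct := hc t ht
    rw [← hcp t ht, Real.div_rpow hut.le hct.le, Real.rpow_sub_one hut.ne',
      Real.rpow_sub_one hct.ne']
    have := Real.rpow_pos_of_pos hct p
    have := Real.rpow_pos_of_pos hut p
    field_simp
  nonneg t ht := div_nonneg (mul_nonneg hp.le (hc t ht).le) (hu t ht).le

end LyapunovScaling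

/-- `Real.rpow` at a negative base is `exp (log z * y) * cos (y * π)`; this gives `S' ≥ 0` in the
`sinh_p` equation before `S ≥ 0` is known. -/
lemma Real.rpow_nonneg_of_le_half {y : ℝ} (hy0 : 0 ≤ y) (hy : y ≤ 1 / 2) (z : ℝ) :
    0 ≤ z ^ y := by
  rcases le_or_gt 0 z with hz | hz
  · exact Real.rpow_nonneg hz y
  rw [Real.rpow_def_of_neg hz]
  refine mul_nonneg (Real.exp_nonneg _) (Real.cos_nonneg_of_mem_Icc ⟨?_, ?_⟩) <;>
    nlinarith [Real.pi_pos]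

section SinhP

variable {p : ℝ} {S : ℝ → ℝ}

lemma sinhp_monotoneOn (hp : 2 ≤ p)
    (hS : ∀ t ∈ Ici (0 : ℝ), HasDerivWithinAt S ((1 + S t ^ p) ^ (1 / p)) (Ici 0) t) :
    MonotoneOn S (Ici 0) :=
  monotoneOn_of_hasDerivWithinAt_nonneg (convex_Ici 0) (fun t ht => (hS t ht).continuousWithinAt)
    (fun t ht => (hS t (interior_subset ht)).mono interior_subset)
    (fun _ _ => Real.rpow_nonneg_of_le_half (by positivity)
      (one_div_le_one_div_of_le two_pos hp) _)

lemma sinhp_nonneg (hp : 2 ≤ p) (hS0 : S 0 = 0)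
    (hS : ∀ t ∈ Ici (0 : ℝ), HasDerivWithinAt S ((1 + S t ^ p) ^ (1 / p)) (Ici 0) t)
    {x : ℝ} (hx : 0 ≤ x) : 0 ≤ S x :=
  hS0 ▸ sinhp_monotoneOn hp hS self_mem_Ici hx hx

lemma one_le_coshp (hp : 2 ≤ p) (hS0 : S 0 = 0)
    (hS : ∀ t ∈ Ici (0 : ℝ), HasDerivWithinAt S ((1 + S t ^ p) ^ (1 / p)) (Ici 0) t)
    {x : ℝ} (hx : 0 ≤ x) : 1 ≤ (1 + S x ^ p) ^ (1 / p) :=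
  Real.one_le_rpow (le_add_of_nonneg_right (Real.rpow_nonneg (sinhp_nonneg hp hS0 hS hx) p))
    (by positivity)

lemma self_le_sinhp (hp : 2 ≤ p) (hS0 : S 0 = 0)
    (hS : ∀ t ∈ Ici (0 : ℝ), HasDerivWithinAt S ((1 + S t ^ p) ^ (1 / p)) (Ici 0) t)
    {x : ℝ} (hx : 0 ≤ x) : x ≤ S x := by
  have hmono : MonotoneOn (fun t => S t - t) (Ici 0) :=
    monotoneOn_of_hasDerivWithinAt_nonneg (convex_Ici 0)
      (fun t ht => ((hS t ht).sub (hasDerivWithinAt_id t _)).continuousWithinAt)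
      (fun t ht => ((hS t (interior_subset ht)).sub (hasDerivWithinAt_id t _)).mono
        interior_subset)
      (fun t ht => sub_nonneg.2 (one_le_coshp hp hS0 hS (interior_subset ht)))
  simpa [hS0] using hmono self_mem_Ici hx hx

section Scaled

variable {sinhcp : ℝ → ℝ} {l : ℝ}

lemma mul_sinhc_eq_div (hS0 : S 0 = 0) (hsinhcp : ∀ x, sinhcp x = if x = 0 then 1 else S x / x)
    (hl : 0 < l) (τ : ℝ) : τ * sinhcp (l * τ) = S (l * τ) / l := by
  rcases eq_or_ne τ 0 with rfl | hτ
  · simp [hS0]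
  rw [hsinhcp, if_neg (mul_ne_zero hl.ne' hτ)]
  field_simp

lemma mul_mul_sinhc (hS0 : S 0 = 0) (hsinhcp : ∀ x, sinhcp x = if x = 0 then 1 else S x / x)
    (hl : 0 ≤ l) (τ : ℝ) : l * (τ * sinhcp (l * τ)) = S (l * τ) := by
  rcases hl.eq_or_lt with rfl | hl
  · simp [hS0]
  rw [mul_sinhc_eq_div hS0 hsinhcp hl]
  field_simp

lemma mul_sinhc_pos (hp : 2 ≤ p) (hS0 : S 0 = 0)
    (hS : ∀ t ∈ Ici (0 : ℝ), HasDerivWithinAt S ((1 + S t ^ p) ^ (1 / p)) (Ici 0) t)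
    (hsinhcp : ∀ x, sinhcp x = if x = 0 then 1 else S x / x) (hl : 0 ≤ l) {τ : ℝ}
    (hτ : 0 < τ) : 0 < τ * sinhcp (l * τ) := by
  rcases hl.eq_or_lt with rfl | hl
  · simpa [hsinhcp] using hτ
  rw [mul_sinhc_eq_div hS0 hsinhcp hl]
  have hlτ := mul_pos hl hτ
  exact div_pos (hlτ.trans_le (self_le_sinhp hp hS0 hS hlτ.le)) hl

lemma hasDerivAt_mul_sinhc (hS0 : S 0 = 0)
    (hS : ∀ t ∈ Ici (0 : ℝ), HasDerivWithinAt S ((1 + S t ^ p) ^ (1 / p)) (Ici 0) t)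
    (hsinhcp : ∀ x, sinhcp x = if x = 0 then 1 else S x / x) (hp : p ≠ 0) (hl : 0 ≤ l) {τ : ℝ}
    (hτ : 0 < τ) :
    HasDerivAt (fun σ => σ * sinhcp (l * σ)) ((1 + S (l * τ) ^ p) ^ (1 / p)) τ := by
  rcases hl.eq_or_lt with rfl | hl
  · simpa [hsinhcp, hS0, Real.zero_rpow hp] using hasDerivAt_id' τ
  have hlτ := mul_pos hl hτ
  have hSd := (hS _ hlτ.le).hasDerivAt (Ici_mem_nhds hlτ)
  have hlin : HasDerivAt (fun σ => l * σ) l τ := by simpa using (hasDerivAt_id τ).const_mul l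
  simp_rw [mul_sinhc_eq_div hS0 hsinhcp hl]
  exact ((hSd.comp τ hlin).div_const l).congr_deriv (by field_simp)

lemma tendsto_mul_sinhc (hS0 : S 0 = 0)
    (hS : ∀ t ∈ Ici (0 : ℝ), HasDerivWithinAt S ((1 + S t ^ p) ^ (1 / p)) (Ici 0) t)
    (hsinhcp : ∀ x, sinhcp x = if x = 0 then 1 else S x / x) (hl : 0 ≤ l) :
    Tendsto (fun σ => σ * sinhcp (l * σ)) (𝓝[>] 0) (𝓝 0) := by
  rcases hl.eq_or_lt with rfl | hl
  · simp only [zero_mul, hsinhcp, if_true, mul_one]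
    exact tendsto_nhdsWithin_of_tendsto_nhds tendsto_id
  simp_rw [mul_sinhc_eq_div hS0 hsinhcp hl]
  have hlσ : Tendsto (fun σ => l * σ) (𝓝[>] 0) (𝓝[Ici 0] 0) := by
    refine tendsto_nhdsWithin_of_tendsto_nhds_of_eventually_within _ ?_
      (eventually_nhdsWithin_of_forall fun σ hσ => (mul_pos hl hσ).le)
    simpa using (tendsto_nhdsWithin_of_tendsto_nhds ((continuous_const_mul l).tendsto 0))
  simpa [hS0] using ((hS 0 self_mem_Ici).continuousWithinAt.tendsto.comp hlσ).div_const l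

end Scaled

end SinhP

lemma lyapunovScaling_sinhp {p C μ : ℝ} {S coshp sinhcp tanhcp cothcp : ℝ → ℝ} (hp : 2 ≤ p)
    (hC : 0 < C) (hμ : 0 ≤ μ) (hS0 : S 0 = 0)
    (hS : ∀ t ∈ Ici (0 : ℝ), HasDerivWithinAt S ((1 + S t ^ p) ^ (1 / p)) (Ici 0) t)
    (hcoshp : ∀ x, coshp x = (1 + S x ^ p) ^ (1 / p))
    (hsinhcp : ∀ x, sinhcp x = if x = 0 then 1 else S x / x)
    (htanhcp : ∀ x, tanhcp x = sinhcp x / coshp x) (hcothcp : ∀ x, cothcp x = 1 / tanhcp x) :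
    LyapunovScaling μ (fun t => C * t ^ p * sinhcp (C ^ (1 / p) * μ ^ (1 / p) * t) ^ p)
      (fun t => p / t * cothcp (C ^ (1 / p) * μ ^ (1 / p) * t))
      (fun t => C * p * t ^ (p - 1) * tanhcp (C ^ (1 / p) * μ ^ (1 / p) * t) ^ (p - 1)) := by
  have hp0 : 0 < p := by linarith
  set l := C ^ (1 / p) * μ ^ (1 / p)
  have hl : 0 ≤ l := by positivity
  have hlp : l ^ p = C * μ := by
    rw [Real.mul_rpow (by positivity) (by positivity), ← Real.rpow_mul hC.le,
      ← Real.rpow_mul hμ, one_div_mul_cancel hp0.ne', Real.rpow_one, Real.rpow_one]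
  have hu := fun τ (hτ : 0 < τ) => mul_sinhc_pos hp hS0 hS hsinhcp hl hτ
  have hcosh : ∀ τ > 0, 0 < coshp (l * τ) := fun τ hτ => by
    rw [hcoshp]
    exact one_pos.trans_le (one_le_coshp hp hS0 hS (by positivity))
  have hsinhc : ∀ τ > 0, 0 < sinhcp (l * τ) := fun τ hτ =>
    pos_of_mul_pos_right (hu τ hτ) hτ.le
  refine (LyapunovScaling.of_rpow (u := fun τ => τ * sinhcp (l * τ)) (c := fun τ => coshp (l * τ))
    hp0 hC (tendsto_mul_sinhc hS0 hS hsinhcp hl) hu (fun τ hτ => ?_) hcosh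
    (fun τ hτ => ?_)).congr (fun τ hτ => ?_) (fun τ hτ => ?_) (fun τ hτ => ?_)
  · rw [hcoshp]
    exact hasDerivAt_mul_sinhc hS0 hS hsinhcp hp0.ne' hl hτ
  · rw [hcoshp, ← Real.rpow_mul, one_div_mul_cancel hp0.ne', Real.rpow_one,
      ← mul_mul_sinhc hS0 hsinhcp hl, Real.mul_rpow hl (hu τ hτ).le, hlp]
    · ring
    · exact add_nonneg zero_le_one (Real.rpow_nonneg (sinhp_nonneg hp hS0 hS (by positivity)) p)
  · beta_reduce
    rw [Real.mul_rpow (mem_Ioi.1 hτ).le (hsinhc τ hτ).le, mul_assoc]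
  · have := hcosh τ hτ
    have := hsinhc τ hτ
    simp only [hcothcp, htanhcp]
    field_simp
  · simp only [htanhcp]
    rw [mul_div_assoc, Real.mul_rpow (mem_Ioi.1 hτ).le (div_pos (hsinhc τ hτ) (hcosh τ hτ)).le]
    ring

theorem unified_accelerated_tensor_flow_convergence_general
    {E : Type*} [NormedAddCommGroup E] [InnerProductSpace ℝ E] [FiniteDimensional ℝ E]
    (p : ℝ) (hp : 2 ≤ p) (C μ : ℝ) (hC : 0 < C) (hμ : 0 ≤ μ) (x₀ : E)
    (S : ℝ → ℝ) (hS0 : S 0 = 0)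
    (hS : ∀ t ∈ Set.Ici (0 : ℝ),
      HasDerivWithinAt S ((1 + S t ^ p) ^ (1 / p)) (Set.Ici 0) t)
    (coshp sinhcp tanhcp cothcp : ℝ → ℝ)
    (hcoshp : ∀ x, coshp x = (1 + S x ^ p) ^ (1 / p))
    (hsinhcp : ∀ x, sinhcp x = if x = 0 then 1 else S x / x)
    (htanhcp : ∀ x, tanhcp x = sinhcp x / coshp x)
    (hcothcp : ∀ x, cothcp x = 1 / tanhcp x)
    (h f : E → ℝ)
    (hhconv : ConvexOn ℝ Set.univ h) (hhdiff : Differentiable ℝ h)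
    (hfdiff : Differentiable ℝ f)
    (hunif : ∀ x y : E, μ * breg h x y ≤ breg f x y)
    (xstar : E)
    (X Z : ℝ → E)
    (hXcont : ContinuousOn X (Set.Ici 0)) (hZcont : ContinuousOn Z (Set.Ici 0))
    (hZ0 : Z 0 = x₀)
    (hflow1 : ∀ t > (0 : ℝ), HasDerivAt X
      ((p / t * cothcp (C ^ (1 / p) * μ ^ (1 / p) * t)) • (Z t - X t)) t)
    (hflow2 : ∀ t > (0 : ℝ), HasDerivAt (fun τ => gradient h (Z τ))
      ((C * p * t ^ (p - 1) * tanhcp (C ^ (1 / p) * μ ^ (1 / p) * t) ^ (p - 1)) •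
        (μ • gradient h (X t) - μ • gradient h (Z t) - gradient f (X t))) t) :
    ∀ t > (0 : ℝ), f (X t) - f xstar ≤
      breg h xstar x₀ / (C * t ^ p * sinhcp (C ^ (1 / p) * μ ^ (1 / p) * t) ^ p) := by
  intro t ht
  have hs := lyapunovScaling_sinhp hp hC hμ hS0 hS hcoshp hsinhcp htanhcp hcothcp
  have hbound := hs.mul_sub_le_breg (xstar := xstar) hμ hhconv hhdiff hfdiff hunif
    (hXcont 0 self_mem_Ici) hZcont hflow1 hflow2 ht
  rw [hZ0] at hbound
  rw [le_div_iff₀ (hs.pos t ht)]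
  linarith

/-- Convergence rate of the unified accelerated tensor flow: for all `t > 0`,
`f(X(t)) − f(x*) ≤ D_h(x*, x₀) / (C·t^p·sinhc_p(C^{1/p}μ^{1/p}t)^p)`. -/
theorem unified_accelerated_tensor_flow_convergence
    {E : Type*} [NormedAddCommGroup E] [InnerProductSpace ℝ E] [FiniteDimensional ℝ E]
    (p : ℝ) (hp : 2 ≤ p) (C μ : ℝ) (hC : 0 < C) (hμ : 0 ≤ μ) (x₀ : E)
    (S : ℝ → ℝ) (hS0 : S 0 = 0)
    (hS : ∀ t ∈ Set.Ici (0 : ℝ),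
      HasDerivWithinAt S ((1 + S t ^ p) ^ (1 / p)) (Set.Ici 0) t)
    (coshp sinhcp tanhcp cothcp : ℝ → ℝ)
    (hcoshp : ∀ x, coshp x = (1 + S x ^ p) ^ (1 / p))
    (hsinhcp : ∀ x, sinhcp x = if x = 0 then 1 else S x / x)
    (htanhcp : ∀ x, tanhcp x = sinhcp x / coshp x)
    (hcothcp : ∀ x, cothcp x = 1 / tanhcp x)
    (h f : E → ℝ)
    (hhconv : ConvexOn ℝ Set.univ h) (hhdiff : Differentiable ℝ h)
    (hfdiff : Differentiable ℝ f)
    (hunif : ∀ x y : E, μ * breg h x y ≤ breg f x y)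
    (xstar : E) (hmin : ∀ x, f xstar ≤ f x)
    (X Z : ℝ → E)
    (hXcont : ContinuousOn X (Set.Ici 0)) (hZcont : ContinuousOn Z (Set.Ici 0))
    (hX0 : X 0 = x₀) (hZ0 : Z 0 = x₀)
    (hflow1 : ∀ t > (0 : ℝ), HasDerivAt X
      ((p / t * cothcp (C ^ (1 / p) * μ ^ (1 / p) * t)) • (Z t - X t)) t)
    (hflow2 : ∀ t > (0 : ℝ), HasDerivAt (fun τ => gradient h (Z τ))
      ((C * p * t ^ (p - 1) * tanhcp (C ^ (1 / p) * μ ^ (1 / p) * t) ^ (p - 1)) •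
        (μ • gradient h (X t) - μ • gradient h (Z t) - gradient f (X t))) t) :
    ∀ t > (0 : ℝ), f (X t) - f xstar ≤
      breg h xstar x₀ / (C * t ^ p * sinhcp (C ^ (1 / p) * μ ^ (1 / p) * t) ^ p) :=
  unified_accelerated_tensor_flow_convergence_general p hp C μ hC hμ x₀ S hS0 hS coshp sinhcp tanhcp
    cothcp hcoshp hsinhcp htanhcp hcothcp h f hhconv hhdiff hfdiff hunif xstar X Z hXcont hZcont hZ0
    hflow1 hflow2
end

section
/- Let E be a finite-dimensional real inner product space, p ≥ 2 a real number, s > 0, M > 0, μ ≥ 0, and C = (1/p)·(M/(p−1))^{p−1}. Let h : E → ℝ be differentiable and 1-uniformly convex of order p, and f : E → ℝ differentiable and μ-uniformly convex with respect to h, with minimizer x*. Let (A_k)_{k≥0} be a strictly increasing sequence of nonnegative reals with A_k > 0 for k ≥ 1, satisfying (A_{k+1} − A_k)^p − C·p^p·s·A_{k+1}^{p−1}·(1 + μ·A_k) ≤ 0 for all k ≥ 0. Let (x_k), (y_k), (z_k) be sequences in E with x₀ = z₀ such that for every k ≥ 0: y_k = x_k + ((A_{k+1} − A_k)/A_{k+1})·(z_k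 − x_k); ⟨∇f(x_{k+1}), y_k − x_{k+1}⟩ ≥ M·s^{1/(p−1)}·‖∇f(x_{k+1})‖^{p/(p−1)}; and ∇h(z_{k+1}) − ∇h(z_k) = ((A_{k+1} − A_k)/(1 + μ·A_k))·(μ·∇h(x_{k+1}) − μ·∇h(z_{k+1}) − ∇f(x_{k+1})). Then for every k ≥ 1, f(x_k) − f(x*) ≤ (1/A_k)·((1 + μ·A₀)·D_h(x*, x₀) + A₀·(f(x₀) − f(x*))). -/
/-!
The Lyapunov function `E_k = A_k (f(x_k) − f(x*)) + (1 + μ A_k) D_h(x*, z_k)` is nonincreasing,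
which gives the rate since `D_h ≥ 0`. In one step, uniform convexity of `f` relative to `h` at `x*`
and at `x_k`, the coupling defining `y_k`, and the three-point identity applied to the mirror step
leave the term `(A_{k+1} − A_k) ⟨∇f(x_{k+1}), z_k − z_{k+1}⟩` to be paid for by
`(1 + μ A_k) D_h(z_{k+1}, z_k) ≥ (1 + μ A_k) ‖z_{k+1} − z_k‖^p / p` and by the tensor-step
inequality. Cauchy–Schwarz and a weighted Young inequality split it accordingly, and the growth
condition on `A_k` is exactly what makes the second part fit.
-/

open scoped RealInnerProductSpace

open Real

namespace Real

theorem mul_le_weighted_young {p β u v : ℝ} (hp : 1 < p) (hβ : 0 < β) (hu : 0 ≤ u)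
    (hv : 0 ≤ v) :
    u * v ≤ β / p * u ^ p + (p - 1) / p * (v ^ p / β) ^ (1 / (p - 1)) := by
  have hp0 : 0 < p := by linarith
  have hp1 : 0 < p - 1 := by linarith
  have hvβ : 0 ≤ v ^ p / β := by positivity
  have hamgm := geom_mean_le_arith_mean2_weighted (by positivity : 0 ≤ 1 / p)
    (by positivity : 0 ≤ (p - 1) / p) (by positivity : 0 ≤ β * u ^ p)
    (by positivity : 0 ≤ (v ^ p / β) ^ (1 / (p - 1))) (by field_simp; ring)
  have hfirst : (β * u ^ p) ^ (1 / p) = β ^ (1 / p) * u := by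
    rw [mul_rpow hβ.le (by positivity), ← rpow_mul hu, mul_one_div_cancel hp0.ne', rpow_one]
  have hsecond : ((v ^ p / β) ^ (1 / (p - 1))) ^ ((p - 1) / p) = v / β ^ (1 / p) := by
    rw [← rpow_mul hvβ, div_rpow (by positivity) hβ.le, ← rpow_mul hv]
    field_simp
    rw [rpow_one]
  rw [hfirst, hsecond] at hamgm
  calc u * v = β ^ (1 / p) * u * (v / β ^ (1 / p)) := by field_simp
    _ ≤ _ := hamgm
    _ = _ := by ring

end Real

theorem one_div_mul_div_rpow_mul_rpow_self {p M : ℝ} (hp : 1 < p) (hM : 0 ≤ M) :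
    1 / p * (M / (p - 1)) ^ (p - 1) * p ^ p = (M * (p / (p - 1))) ^ (p - 1) := by
  have hp0 : 0 < p := by linarith
  rw [mul_rpow hM (by positivity), div_rpow hp0.le (by linarith), div_rpow hM (by linarith),
    rpow_sub_one hp0.ne' p]
  field_simp

theorem young_dual_term_le_of_growth {p s M α β b G : ℝ} (hp : 1 < p) (hs : 0 ≤ s)
    (hM : 0 ≤ M) (hα : 0 ≤ α) (hb : 0 ≤ b) (hβ : 0 < β) (hG : 0 ≤ G)
    (hgrowth : α ^ p ≤ (M * (p / (p - 1))) ^ (p - 1) * s * b ^ (p - 1) * β) :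
    (p - 1) / p * ((α * G) ^ p / β) ^ (1 / (p - 1)) ≤
      b * (M * s ^ (1 / (p - 1)) * G ^ (p / (p - 1))) := by
  have hp0 : 0 < p := by linarith
  have hp1 : 0 < p - 1 := by linarith
  have hsplit : ((α * G) ^ p / β) ^ (1 / (p - 1)) =
      (α ^ p / β) ^ (1 / (p - 1)) * G ^ (p / (p - 1)) := by
    rw [mul_rpow hα hG, mul_div_right_comm, mul_rpow (by positivity) (by positivity),
      ← rpow_mul hG, mul_one_div]
  have hroot : ((M * (p / (p - 1))) ^ (p - 1) * s * b ^ (p - 1)) ^ (1 / (p - 1)) =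
      M * (p / (p - 1)) * s ^ (1 / (p - 1)) * b := by
    rw [mul_rpow (by positivity) (by positivity), mul_rpow (by positivity) hs,
      ← rpow_mul (by positivity), ← rpow_mul hb, mul_one_div_cancel hp1.ne', rpow_one,
      rpow_one]
  have hcoef : (α ^ p / β) ^ (1 / (p - 1)) ≤ M * (p / (p - 1)) * s ^ (1 / (p - 1)) * b := by
    rw [← hroot]
    refine rpow_le_rpow (by positivity) ?_ (by positivity)
    rwa [div_le_iff₀ hβ]
  calc (p - 1) / p * ((α * G) ^ p / β) ^ (1 / (p - 1))
      ≤ (p - 1) / p * (M * (p / (p - 1)) * s ^ (1 / (p - 1)) * b * G ^ (p / (p - 1))) := by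
        rw [hsplit]
        gcongr
    _ = b * (M * s ^ (1 / (p - 1)) * G ^ (p / (p - 1))) := by field_simp

section InnerProductSpace

variable {E : Type*} [NormedAddCommGroup E] [InnerProductSpace ℝ E]

theorem inner_le_young_of_growth {p s M α β b : ℝ} (hp : 1 < p) (hs : 0 ≤ s) (hM : 0 ≤ M)
    (hα : 0 ≤ α) (hb : 0 ≤ b) (hβ : 0 < β)
    (hgrowth : α ^ p ≤ (M * (p / (p - 1))) ^ (p - 1) * s * b ^ (p - 1) * β) (g w : E) :
    α * ⟪g, w⟫ ≤ β * (1 / p * ‖w‖ ^ p) + b * (M * s ^ (1 / (p - 1)) * ‖g‖ ^ (p / (p - 1))) :=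
  calc α * ⟪g, w⟫ ≤ ‖w‖ * (α * ‖g‖) := by
        nlinarith [real_inner_le_norm g w]
    _ ≤ β / p * ‖w‖ ^ p + (p - 1) / p * ((α * ‖g‖) ^ p / β) ^ (1 / (p - 1)) :=
        mul_le_weighted_young hp hβ (norm_nonneg w) (by positivity)
    _ ≤ β / p * ‖w‖ ^ p + b * (M * s ^ (1 / (p - 1)) * ‖g‖ ^ (p / (p - 1))) :=
        add_le_add_right
          (young_dual_term_le_of_growth hp hs hM hα hb hβ (norm_nonneg g) hgrowth) _
    _ = _ := by ring

theorem mul_inner_eq_of_coupling {a a' : ℝ} (ha' : a' ≠ 0) {x z y x' : E} (g : E)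
    (hy : y = x + ((a' - a) / a') • (z - x)) :
    a' * ⟪g, y - x'⟫ = a * ⟪g, x - x'⟫ + (a' - a) * ⟪g, z - x'⟫ := by
  rw [hy]
  simp only [inner_add_right, inner_sub_right, real_inner_smul_right]
  field_simp
  ring

variable [CompleteSpace E]

def UniformlyConvexOfOrder (p : ℝ) (h : E → ℝ) : Prop :=
  ∀ x y : E, h x + ⟪gradient h x, y - x⟫ + 1 / p * ‖y - x‖ ^ p ≤ h y

def UniformlyConvexWrt (μ : ℝ) (h f : E → ℝ) : Prop :=
  ∀ x y : E, μ * breg h x y ≤ breg f x y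

theorem UniformlyConvexOfOrder.norm_rpow_le_breg {p : ℝ} {h : E → ℝ}
    (huc : UniformlyConvexOfOrder p h) (u v : E) : 1 / p * ‖u - v‖ ^ p ≤ breg h u v := by
  have := huc v u
  simp only [breg]
  linarith

theorem UniformlyConvexOfOrder.breg_nonneg {p : ℝ} {h : E → ℝ}
    (huc : UniformlyConvexOfOrder p h) (hp : 0 ≤ p) (u v : E) : 0 ≤ breg h u v :=
  (by positivity : 0 ≤ 1 / p * ‖u - v‖ ^ p).trans (huc.norm_rpow_le_breg u v)

theorem breg_three_point (h : E → ℝ) (u a b : E) :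
    ⟪gradient h b - gradient h a, u - b⟫ = breg h u a - breg h u b - breg h b a := by
  simp only [breg, inner_sub_left, inner_sub_right]
  ring

theorem mul_inner_eq_of_mirror_step {h : E → ℝ} {α β μ : ℝ} (hβ : β ≠ 0) {z z' x' u : E}
    (g : E) (hz : gradient h z' - gradient h z =
      (α / β) • (μ • gradient h x' - μ • gradient h z' - g)) :
    α * ⟪g, z' - u⟫ = α * μ * (breg h u x' - breg h u z' - breg h z' x') +
      β * (breg h u z - breg h u z' - breg h z' z) := by
  have hinner := congrArg (fun v : E => ⟪v, u - z'⟫) hz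
  have t1 := breg_three_point h u z z'
  have t2 := breg_three_point h u x' z'
  simp only [inner_sub_left, real_inner_smul_left] at hinner t1 t2
  rw [← t1, ← t2, hinner]
  simp only [inner_sub_right]
  field_simp
  ring

theorem lyapunov_step {p s M μ a a' : ℝ} {f h : E → ℝ} (hp : 1 < p) (hs : 0 ≤ s)
    (hM : 0 ≤ M) (hμ : 0 ≤ μ) (huc : UniformlyConvexOfOrder p h)
    (hunif : UniformlyConvexWrt μ h f) (ha : 0 ≤ a) (haa' : a < a')
    (hgrowth : (a' - a) ^ p ≤ (M * (p / (p - 1))) ^ (p - 1) * s * a' ^ (p - 1) * (1 + μ * a))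
    {x y z x' z' : E} (u : E) (hy : y = x + ((a' - a) / a') • (z - x))
    (hG : M * s ^ (1 / (p - 1)) * ‖gradient f x'‖ ^ (p / (p - 1)) ≤
      ⟪gradient f x', y - x'⟫)
    (hz : gradient h z' - gradient h z = ((a' - a) / (1 + μ * a)) •
      (μ • gradient h x' - μ • gradient h z' - gradient f x')) :
    a' * (f x' - f u) + (1 + μ * a') * breg h u z' ≤
      a * (f x - f u) + (1 + μ * a) * breg h u z := by
  set g := gradient f x'
  have hα : 0 ≤ a' - a := by linarith
  have hβ : 0 < 1 + μ * a := by positivity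
  have hfu : μ * breg h u x' ≤ f u - f x' - ⟪g, u - x'⟫ := hunif u x'
  have hfx : μ * breg h x x' ≤ f x - f x' - ⟪g, x - x'⟫ := hunif x x'
  have hcoupling := mul_inner_eq_of_coupling (a := a) (x' := x') (by linarith) g hy
  have hmirror := mul_inner_eq_of_mirror_step (u := u) hβ.ne' g hz
  have hyoung := inner_le_young_of_growth hp hs hM hα (by linarith) hβ hgrowth g (z - z')
  have hzz : 1 / p * ‖z - z'‖ ^ p ≤ breg h z' z := by
    simpa only [norm_sub_rev] using huc.norm_rpow_le_breg z' z
  have hDzx := huc.breg_nonneg (by linarith) z' x'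
  have hDxx := huc.breg_nonneg (by linarith) x x'
  have m1 := mul_le_mul_of_nonneg_left hfu hα
  have m2 := mul_le_mul_of_nonneg_left hfx ha
  have m3 := mul_le_mul_of_nonneg_left hzz hβ.le
  have m4 := mul_le_mul_of_nonneg_left hG (by linarith : 0 ≤ a')
  have m5 := mul_nonneg (mul_nonneg hα hμ) hDzx
  have m6 := mul_nonneg ha (mul_nonneg hμ hDxx)
  simp only [inner_sub_right] at m1 m2 m4 hcoupling hmirror hyoung
  linarith

end InnerProductSpace

theorem unified_accelerated_tensor_method_convergence_general
    {E : Type*} [NormedAddCommGroup E] [InnerProductSpace ℝ E] [FiniteDimensional ℝ E]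
    (p : ℝ) (hp : 2 ≤ p) (s M μ C : ℝ) (hs : 0 < s) (hM : 0 < M) (hμ : 0 ≤ μ)
    (hC : C = 1 / p * (M / (p - 1)) ^ (p - 1))
    (h f : E → ℝ)
    (huc : ∀ x y : E, h x + ⟪gradient h x, y - x⟫ + 1 / p * ‖y - x‖ ^ p ≤ h y)
    (hunif : ∀ x y : E, μ * breg h x y ≤ breg f x y)
    (xstar : E)
    (A : ℕ → ℝ) (hA : StrictMono A) (hA0 : 0 ≤ A 0)
    (hAcond : ∀ k,
      (A (k + 1) - A k) ^ p - C * p ^ p * s * A (k + 1) ^ (p - 1) * (1 + μ * A k) ≤ 0)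
    (x y z : ℕ → E) (hinit : x 0 = z 0)
    (hy : ∀ k, y k = x k + ((A (k + 1) - A k) / A (k + 1)) • (z k - x k))
    (hG : ∀ k, M * s ^ (1 / (p - 1)) * ‖gradient f (x (k + 1))‖ ^ (p / (p - 1)) ≤
      ⟪gradient f (x (k + 1)), y k - x (k + 1)⟫)
    (hz : ∀ k, gradient h (z (k + 1)) - gradient h (z k) =
      ((A (k + 1) - A k) / (1 + μ * A k)) •
        (μ • gradient h (x (k + 1)) - μ • gradient h (z (k + 1))
          - gradient f (x (k + 1)))) :
    ∀ k ≥ 1, f (x k) - f xstar ≤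
      (1 / A k) * ((1 + μ * A 0) * breg h xstar (x 0) + A 0 * (f (x 0) - f xstar)) := by
  intro k hk
  have hp1 : 1 < p := by linarith
  have hAnn : ∀ k, 0 ≤ A k := fun k => hA0.trans (hA.monotone k.zero_le)
  have hCp : C * p ^ p = (M * (p / (p - 1))) ^ (p - 1) :=
    hC ▸ one_div_mul_div_rpow_mul_rpow_self hp1 hM.le
  have hlyap : Antitone fun k =>
      A k * (f (x k) - f xstar) + (1 + μ * A k) * breg h xstar (z k) :=
    antitone_nat_of_succ_le fun k => lyapunov_step hp1 hs.le hM.le hμ huc hunif (hAnn k)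
      (hA k.lt_succ_self) (by linarith [hCp ▸ hAcond k]) xstar (hy k) (hG k) (hz k)
  have hAk : 0 < A k := hA0.trans_lt (hA (by omega))
  have hDk : 0 ≤ (1 + μ * A k) * breg h xstar (z k) :=
    mul_nonneg (add_nonneg zero_le_one (mul_nonneg hμ (hAnn k)))
      (UniformlyConvexOfOrder.breg_nonneg huc (by linarith) _ _)
  have hdecay := hlyap k.zero_le
  simp only [← hinit] at hdecay
  rw [one_div_mul_eq_div, le_div_iff₀ hAk]
  linarith

/-- Convergence rate of the unified accelerated tensor method family: for all `k ≥ 1`,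
`f(x_k) − f(x*) ≤ (1/A_k)·((1 + μA₀)·D_h(x*, x₀) + A₀·(f(x₀) − f(x*)))`. -/
theorem unified_accelerated_tensor_method_convergence
    {E : Type*} [NormedAddCommGroup E] [InnerProductSpace ℝ E] [FiniteDimensional ℝ E]
    (p : ℝ) (hp : 2 ≤ p) (s M μ C : ℝ) (hs : 0 < s) (hM : 0 < M) (hμ : 0 ≤ μ)
    (hC : C = 1 / p * (M / (p - 1)) ^ (p - 1))
    (h f : E → ℝ) (hhdiff : Differentiable ℝ h) (hfdiff : Differentiable ℝ f)
    (huc : ∀ x y : E, h x + ⟪gradient h x, y - x⟫ + 1 / p * ‖y - x‖ ^ p ≤ h y)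
    (hunif : ∀ x y : E, μ * breg h x y ≤ breg f x y)
    (xstar : E) (hmin : ∀ x, f xstar ≤ f x)
    (A : ℕ → ℝ) (hA : StrictMono A) (hA0 : 0 ≤ A 0) (hApos : ∀ k ≥ 1, 0 < A k)
    (hAcond : ∀ k,
      (A (k + 1) - A k) ^ p - C * p ^ p * s * A (k + 1) ^ (p - 1) * (1 + μ * A k) ≤ 0)
    (x y z : ℕ → E) (hinit : x 0 = z 0)
    (hy : ∀ k, y k = x k + ((A (k + 1) - A k) / A (k + 1)) • (z k - x k))
    (hG : ∀ k, M * s ^ (1 / (p - 1)) * ‖gradient f (x (k + 1))‖ ^ (p / (p - 1)) ≤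
      ⟪gradient f (x (k + 1)), y k - x (k + 1)⟫)
    (hz : ∀ k, gradient h (z (k + 1)) - gradient h (z k) =
      ((A (k + 1) - A k) / (1 + μ * A k)) •
        (μ • gradient h (x (k + 1)) - μ • gradient h (z (k + 1))
          - gradient f (x (k + 1)))) :
    ∀ k ≥ 1, f (x k) - f xstar ≤
      (1 / A k) * ((1 + μ * A 0) * breg h xstar (x 0) + A 0 * (f (x 0) - f xstar)) :=
  unified_accelerated_tensor_method_convergence_general p hp s M μ C hs hM hμ hC h f huc hunif xstar
    A hA hA0 hAcond x y z hinit hy hG hz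
end

section
/- Fix a real number p ≥ 2, constants C > 0, s > 0, μ ≥ 0, and for r ≥ 0 define S(r) = {x ∈ ℝ : x ≥ r and (x − r)^p − C·p^p·s·x^{p−1}·(1 + μ·r) ≤ 0}. Let (B_k)_{k≥0} be a sequence with B₀ = 0 such that for each k, B_{k+1} ∈ S(B_k) and x ≤ B_{k+1} for every x ∈ S(B_k) (i.e., B_{k+1} is the maximum of S(B_k)). Then for every sequence (A_k)_{k≥0} with A₀ = 0 and A_{k+1} ∈ S(A_k) for all k ≥ 0, one has A_k ≤ B_k for all k ≥ 0. -/
/-- The greedy (maximal) sequence for the timestep condition dominates every admissible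
sequence: if `B₀ = 0`, each `B_{k+1}` is the maximum of
`S(B_k) = {x ≥ B_k : (x − B_k)^p − C·p^p·s·x^{p−1}·(1 + μ·B_k) ≤ 0}`, and `(A_k)` is any
sequence with `A₀ = 0` and `A_{k+1} ∈ S(A_k)`, then `A_k ≤ B_k` for all `k`. -/
theorem greedy_timestep_sequence_dominates
    (p C s μ : ℝ) (hp : 2 ≤ p) (hC : 0 < C) (hs : 0 < s) (hμ : 0 ≤ μ)
    (Sset : ℝ → Set ℝ)
    (hSset : ∀ r, Sset r = {x : ℝ | r ≤ x ∧
      (x - r) ^ p - C * p ^ p * s * x ^ (p - 1) * (1 + μ * r) ≤ 0})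
    (B : ℕ → ℝ) (hB0 : B 0 = 0)
    (hBmem : ∀ k, B (k + 1) ∈ Sset (B k))
    (hBmax : ∀ k, ∀ x ∈ Sset (B k), x ≤ B (k + 1))
    (A : ℕ → ℝ) (hA0 : A 0 = 0)
    (hAmem : ∀ k, A (k + 1) ∈ Sset (A k)) :
    ∀ k, A k ≤ B k := by
  have hp0 : (0:ℝ) ≤ p := by linarith
  have hpne : p ≠ 0 := by positivity
  -- membership gives monotonicity
  have hAmono : ∀ k, A k ≤ A (k + 1) := fun k => by
    have := hAmem k; rw [hSset] at this; exact this.1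
  have hBmono : ∀ k, B k ≤ B (k + 1) := fun k => by
    have := hBmem k; rw [hSset] at this; exact this.1
  have hAnn : ∀ k, 0 ≤ A k := by
    intro k; induction k with
    | zero => rw [hA0]
    | succ n ih => exact le_trans ih (hAmono n)
  have hBnn : ∀ k, 0 ≤ B k := by
    intro k; induction k with
    | zero => rw [hB0]
    | succ n ih => exact le_trans ih (hBmono n)
  intro k
  induction k with
  | zero => rw [hA0, hB0]
  | succ k ih =>
    rcases le_or_gt (A (k + 1)) (B k) with h | h
    · exact le_trans h (hBmono k)
    · apply hBmax k
      rw [hSset]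
      have hmem := hAmem k
      rw [hSset] at hmem
      obtain ⟨hle, hineq⟩ := hmem
      refine ⟨le_of_lt h, ?_⟩
      have h1 : (A (k+1) - B k) ^ p ≤ (A (k+1) - A k) ^ p := by
        apply Real.rpow_le_rpow (by linarith) (by linarith) hp0
      have h2 : C * p ^ p * s * A (k+1) ^ (p-1) * (1 + μ * A k) ≤
          C * p ^ p * s * A (k+1) ^ (p-1) * (1 + μ * B k) := by
        apply mul_le_mul_of_nonneg_left
        · have := mul_le_mul_of_nonneg_left ih hμ; linarith
        · have h3 : (0:ℝ) ≤ p ^ p := Real.rpow_nonneg hp0 p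
          have h4 : (0:ℝ) ≤ A (k+1) ^ (p-1) := Real.rpow_nonneg (hAnn (k+1)) _
          positivity
      linarith
end
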